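/- arXiv:1009.3526 — 9 statements merged into one kernel-verified Lean document; each statement's English description precedes it below -/
import Mathlib

section
/- Mild chain rule (Example 2; the deterministic case of the paper's mild Itô formula). In the deterministic mild-process setting, let V be a separable real Hilbert space and let φ : Ȟ → V be twice continuously Fréchet differentiable. Then for all t₀, t ∈ I with t₀ < t the function (t₀,t) ∋ s ↦ φ'(S_{s,t} x_s)(S_{s,t} y_s) ∈ V is Bochner integrable and φ(x_t) = φ(S_{t₀,t} x_{t₀}) + ∫_{t₀}^{t} φ'(S_{s,t} x_s)(S_{s,t} y_s) ds. (All evaluations are well defined since x_s ∈ Ȟ for s > τ and S_{s,t} maps Ĥ into Ȟ.) -/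
/-!
By the evolution property of `S`, applying `S_{s,t}` to the mild formula at time `s` shows that
`z_s := S_{s,t} x_s = S_{t₀,t} x_{t₀} + ∫_{t₀}^s S_{r,t} y_r dr` for `t₀ ≤ s < t`, and the mild
formula at `t` says that `x_t` is the value of this expression at `s = t`. So `z` is an absolutely
continuous path with a.e. derivative `S_{s,t} y_s` (Lebesgue differentiation). A `C¹` map `φ` is
Lipschitz on the compact image of `z`, hence `φ ∘ z` is absolutely continuous with a.e. derivative
`φ'(z_s)(S_{s,t} y_s)`, and the fundamental theorem of calculus for absolutely continuous functions
gives the formula.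
-/

open MeasureTheory Set Filter

namespace AbsolutelyContinuousOnInterval

theorem of_dist_le {X Y : Type*} [PseudoMetricSpace X] [PseudoMetricSpace Y] {f : ℝ → X}
    {g : ℝ → Y} {a b : ℝ} (K : ℝ) (hg : AbsolutelyContinuousOnInterval g a b)
    (h : ∀ u ∈ uIcc a b, ∀ v ∈ uIcc a b, dist (f u) (f v) ≤ K * dist (g u) (g v)) :
    AbsolutelyContinuousOnInterval f a b := by
  refine squeeze_zero' (Eventually.of_forall fun _ => Finset.sum_nonneg fun _ _ => dist_nonneg)
    ?_ (by simpa using Tendsto.const_mul K hg)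
  filter_upwards [mem_inf_of_right (mem_principal_self _)] with E hE
  rw [Finset.mul_sum]
  exact Finset.sum_le_sum fun i hi => h _ (hE.1 i hi).1 _ (hE.1 i hi).2

theorem _root_.LipschitzOnWith.comp_absolutelyContinuousOnInterval {X Y : Type*}
    [PseudoMetricSpace X] [PseudoMetricSpace Y] {φ : X → Y} {f : ℝ → X} {a b : ℝ} {K : NNReal}
    (hφ : LipschitzOnWith K φ (f '' uIcc a b)) (hf : AbsolutelyContinuousOnInterval f a b) :
    AbsolutelyContinuousOnInterval (φ ∘ f) a b :=
  hf.of_dist_le K fun _ hu _ hv =>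
    hφ.dist_le_mul _ (mem_image_of_mem f hu) _ (mem_image_of_mem f hv)

variable {E : Type*} [NormedAddCommGroup E] [NormedSpace ℝ E]

/-- Mathlib's `absolutelyContinuousOnInterval_intervalIntegral` is stated for real integrands;
the primitive of `‖f‖` dominates the general case. -/
theorem _root_.IntervalIntegrable.absolutelyContinuousOnInterval_integral {f : ℝ → E}
    {a b c : ℝ} (hf : IntervalIntegrable f volume a b) (hc : c ∈ uIcc a b) :
    AbsolutelyContinuousOnInterval (fun x => ∫ r in c..x, f r) a b := by
  refine (hf.norm.absolutelyContinuousOnInterval_intervalIntegral hc).of_dist_le 1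
    fun u hu v hv => ?_
  have hcu := hf.mono_set (uIcc_subset_uIcc hc hu)
  have hcv := hf.mono_set (uIcc_subset_uIcc hc hv)
  rw [one_mul, dist_eq_norm, dist_eq_norm, Real.norm_eq_abs,
    intervalIntegral.integral_interval_sub_left hcu hcv,
    intervalIntegral.integral_interval_sub_left hcu.norm hcv.norm]
  exact intervalIntegral.norm_integral_le_abs_integral_norm

theorem integral_eq_sub_of_ae_hasDerivAt [CompleteSpace E] {G g : ℝ → E} {a b : ℝ}
    (hG : AbsolutelyContinuousOnInterval G a b) (hg : IntervalIntegrable g volume a b)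
    (hderiv : ∀ᵐ x, x ∈ uIcc a b → HasDerivAt G (g x) x) :
    ∫ x in a..b, g x = G b - G a := by
  have hH : AbsolutelyContinuousOnInterval (fun x => G x - ∫ r in a..x, g r) a b :=
    hG.sub (hg.absolutelyContinuousOnInterval_integral left_mem_uIcc)
  obtain ⟨C, hC⟩ := hH.const_of_ae_hasDerivAt_zero <| by
    filter_upwards [hderiv, hg.ae_hasDerivAt_integral] with x hGx hgx hx
    simpa using! (hGx hx).sub (hgx hx a left_mem_uIcc)
  have ha := hC a left_mem_uIcc
  have hb := hC b right_mem_uIcc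
  simp only [intervalIntegral.integral_same, sub_zero] at ha
  rw [ha, ← hb, sub_sub_cancel]

end AbsolutelyContinuousOnInterval

section ChainRule

variable {E V : Type*} [NormedAddCommGroup E] [NormedSpace ℝ E]
  [NormedAddCommGroup V] [NormedSpace ℝ V]
  {φ : E → V} {f : ℝ → E} {a b : ℝ}

theorem ContDiff.absolutelyContinuousOnInterval_comp_add_integral (hφ : ContDiff ℝ 1 φ)
    (hf : IntervalIntegrable f volume a b) (c : E) :
    AbsolutelyContinuousOnInterval (fun s => φ (c + ∫ r in a..s, f r)) a b := by
  have hF : AbsolutelyContinuousOnInterval (fun s => c + ∫ r in a..s, f r) a b :=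
    (hf.absolutelyContinuousOnInterval_integral left_mem_uIcc).of_dist_le 1
      fun _ _ _ _ => by rw [dist_add_left, one_mul]
  obtain ⟨K, hK⟩ := hφ.locallyLipschitz.locallyLipschitzOn.exists_lipschitzOnWith_of_compact
    (isCompact_uIcc.image_of_continuousOn hF.continuousOn)
  exact hK.comp_absolutelyContinuousOnInterval hF

theorem ContDiff.intervalIntegrable_fderiv_add_integral_apply (hφ : ContDiff ℝ 1 φ)
    (hf : IntervalIntegrable f volume a b) (c : E) :
    IntervalIntegrable (fun s => fderiv ℝ φ (c + ∫ r in a..s, f r) (f s)) volume a b := by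
  have hA : ContinuousOn (fun s => fderiv ℝ φ (c + ∫ r in a..s, f r)) (uIcc a b) :=
    (hφ.continuous_fderiv one_ne_zero).comp_continuousOn
      ((hf.absolutelyContinuousOnInterval_integral left_mem_uIcc).continuousOn.const_add c)
  obtain ⟨M, hM⟩ := isCompact_uIcc.exists_bound_of_continuousOn hA
  refine (hf.norm.const_mul M).mono_fun' ?_ ?_
  · exact (ContinuousLinearMap.id ℝ _).aestronglyMeasurable_comp₂
      ((hA.mono uIoc_subset_uIcc).aestronglyMeasurable measurableSet_uIoc)
      hf.def'.aestronglyMeasurable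
  · refine ae_restrict_of_forall_mem measurableSet_uIoc fun s hs => ?_
    exact (ContinuousLinearMap.le_opNorm _ _).trans
      (mul_le_mul_of_nonneg_right (hM s (uIoc_subset_uIcc hs)) (norm_nonneg _))

theorem ContDiff.apply_add_integral_sub_apply [CompleteSpace E] [CompleteSpace V]
    (hφ : ContDiff ℝ 1 φ)
    (hf : IntervalIntegrable f volume a b) (c : E) :
    φ (c + ∫ r in a..b, f r) - φ c =
      ∫ s in a..b, fderiv ℝ φ (c + ∫ r in a..s, f r) (f s) := by
  rw [(hφ.absolutelyContinuousOnInterval_comp_add_integral hf c).integral_eq_sub_of_ae_hasDerivAt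
    (hφ.intervalIntegrable_fderiv_add_integral_apply hf c)]
  · simp
  filter_upwards [hf.ae_hasDerivAt_integral] with s hs hsab
  exact (hφ.differentiable one_ne_zero _).hasFDerivAt.comp_hasDerivAt s
    ((hs hsab a left_mem_uIcc).const_add c)

end ChainRule

theorem apply_mild_eq {Hv Hh : Type*} [NormedAddCommGroup Hv] [NormedSpace ℝ Hv]
    [CompleteSpace Hv] [NormedAddCommGroup Hh] [NormedSpace ℝ Hh]
    (S : ℝ → ℝ → Hh →L[ℝ] Hv) (ι : Hv →L[ℝ] Hh) {y : ℝ → Hh} {τ s t : ℝ} {u₀ : Hh} {u : Hv}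
    (hτs : τ < s) (hS : ∀ r ∈ Ico τ s, ∀ v, S s t (ι (S r s v)) = S r t v)
    (hy : IntegrableOn (fun r => S r s (y r)) (Ioo τ s))
    (hu : u = S τ s u₀ + ∫ r in Ioo τ s, S r s (y r)) :
    S s t (ι u) = S τ t u₀ + ∫ r in Ioo τ s, S r t (y r) := by
  change (S s t).comp ι u = _
  rw [hu, map_add, ← ContinuousLinearMap.integral_comp_comm _ hy]
  congr 1
  · exact hS τ (left_mem_Ico.2 hτs) u₀
  · exact setIntegral_congr_fun measurableSet_Ioo fun r hr => hS r (Ioo_subset_Ico_self hr) (y r)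

theorem apply_mild_eq_add_intervalIntegral {Hv Ht Hh : Type*} [NormedAddCommGroup Hv]
    [NormedSpace ℝ Hv] [CompleteSpace Hv] [NormedAddCommGroup Ht] [NormedSpace ℝ Ht]
    [NormedAddCommGroup Hh] [NormedSpace ℝ Hh] {I : Set ℝ} {τ t s : ℝ}
    (e₁ : Hv →L[ℝ] Ht) (e₂ : Ht →L[ℝ] Hh) (S : ℝ → ℝ → Hh →L[ℝ] Hv) {x : ℝ → Ht} {y : ℝ → Hh}
    {xv : ℝ → Hv} (hIcc : Icc τ t ⊆ I)
    (hS_comp : ∀ t₁ t₂ t₃, t₁ ∈ I → t₂ ∈ I → t₃ ∈ I → t₁ < t₂ → t₂ < t₃ →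
      ∀ v : Hh, S t₂ t₃ (e₂ (e₁ (S t₁ t₂ v))) = S t₁ t₃ v)
    (hxv : ∀ t ∈ I, τ < t → e₁ (xv t) = x t)
    (hInt : ∀ t ∈ I, IntegrableOn (fun s => S s t (y s)) (Ioo τ t))
    (hMild : ∀ t ∈ I, τ < t → xv t = S τ t (e₂ (x τ)) + ∫ s in Ioo τ t, S s t (y s))
    (hs : s ∈ Ico τ t) :
    S s t (e₂ (x s)) = S τ t (e₂ (x τ)) + ∫ r in τ..s, S r t (y r) := by
  obtain ⟨hτs, hst⟩ := hs
  rcases hτs.eq_or_lt with rfl | hτs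
  · simp
  have hsI : s ∈ I := hIcc ⟨hτs.le, hst.le⟩
  have hIco : Ico τ s ⊆ I := fun r hr => hIcc ⟨hr.1, hr.2.le.trans hst.le⟩
  rw [intervalIntegral.integral_of_le hτs.le, integral_Ioc_eq_integral_Ioo, ← hxv s hsI hτs]
  exact apply_mild_eq S (e₂.comp e₁) hτs
    (fun r hr => hS_comp r s t (hIco hr) hsI (hIcc ⟨hτs.le.trans hst.le, le_rfl⟩) hr.2 hst)
    (hInt s hsI) (hMild s hsI hτs)

theorem mild_chain_rule_general
    {Hv Ht Hh V : Type*}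
    [NormedAddCommGroup Hv] [InnerProductSpace ℝ Hv] [CompleteSpace Hv]
    [NormedAddCommGroup Ht] [InnerProductSpace ℝ Ht]
    [NormedAddCommGroup Hh] [InnerProductSpace ℝ Hh]
    [NormedAddCommGroup V] [InnerProductSpace ℝ V] [CompleteSpace V]
    -- the time set `I ⊆ [0,∞)`, closed and convex with nonempty interior, and `τ = inf I`
    (I : Set ℝ) (hIclosed : IsClosed I)
    (hIconv : Convex ℝ I)
    (τ : ℝ) (hτ : IsGLB I τ)
    -- continuous dense embeddings `Ȟ ⊆ H̃ ⊆ Ĥ`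
    (e₁ : Hv →L[ℝ] Ht)
    (e₂ : Ht →L[ℝ] Hh)
    -- the semigroup `S`
    (S : ℝ → ℝ → (Hh →L[ℝ] Hv))
    (hS_comp : ∀ t₁ t₂ t₃, t₁ ∈ I → t₂ ∈ I → t₃ ∈ I → t₁ < t₂ → t₂ < t₃ →
      ∀ v : Hh, S t₂ t₃ (e₂ (e₁ (S t₁ t₂ v))) = S t₁ t₃ v)
    -- the mild process `x` with mild drift `y`; `xv t` realizes `x t ∈ Ȟ` for `t > τ`
    (x : ℝ → Ht)
    (y : ℝ → Hh)
    (xv : ℝ → Hv) (hxv : ∀ t ∈ I, τ < t → e₁ (xv t) = x t)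
    (hInt : ∀ t ∈ I, IntegrableOn (fun s => S s t (y s)) (Ioo τ t))
    (hMild : ∀ t ∈ I, τ < t →
      xv t = S τ t (e₂ (x τ)) + ∫ s in Ioo τ t, S s t (y s))
    -- the test function
    (φ : Hv → V) (hφ : ContDiff ℝ 2 φ)
    (t₀ t : ℝ) (ht₀ : t₀ ∈ I) (ht : t ∈ I) (hlt : t₀ < t) :
    IntegrableOn (fun s => fderiv ℝ φ (S s t (e₂ (x s))) (S s t (y s))) (Ioo t₀ t) ∧
    φ (xv t) =
      φ (S t₀ t (e₂ (x t₀))) +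
        ∫ s in Ioo t₀ t, fderiv ℝ φ (S s t (e₂ (x s))) (S s t (y s)) := by
  have hτt₀ : τ ≤ t₀ := hτ.1 ht₀
  have hIcc : Icc τ t ⊆ I := hIconv.ordConnected.out (hτ.mem_of_isClosed ⟨t, ht⟩ hIclosed) ht
  set f : ℝ → Hv := fun r => S r t (y r)
  have hf : IntervalIntegrable f volume τ t :=
    (intervalIntegrable_iff_integrableOn_Ioo_of_le (hτt₀.trans hlt.le)).2 (hInt t ht)
  have hz : ∀ s ∈ Ico τ t, S s t (e₂ (x s)) = S τ t (e₂ (x τ)) + ∫ r in τ..s, f r :=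
    fun s hs => apply_mild_eq_add_intervalIntegral e₁ e₂ S hIcc hS_comp hxv hInt hMild hs
  have hrestart : ∀ s ∈ Icc t₀ t, S τ t (e₂ (x τ)) + ∫ r in τ..s, f r =
      S t₀ t (e₂ (x t₀)) + ∫ r in t₀..s, f r := fun s hs => by
    have ht₀' : t₀ ∈ uIcc τ t := mem_uIcc_of_le hτt₀ hlt.le
    have hs' : s ∈ uIcc τ t := mem_uIcc_of_le (hτt₀.trans hs.1) hs.2
    rw [hz t₀ ⟨hτt₀, hlt⟩, add_assoc, intervalIntegral.integral_add_adjacent_intervals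
      (hf.mono_set (uIcc_subset_uIcc left_mem_uIcc ht₀'))
      (hf.mono_set (uIcc_subset_uIcc ht₀' hs'))]
  have hxt : xv t = S t₀ t (e₂ (x t₀)) + ∫ r in t₀..t, f r := by
    rw [← hrestart t ⟨hlt.le, le_rfl⟩, hMild t ht (hτt₀.trans_lt hlt),
      intervalIntegral.integral_of_le (hτt₀.trans hlt.le), integral_Ioc_eq_integral_Ioo]
  have hpath : EqOn (fun s => fderiv ℝ φ (S t₀ t (e₂ (x t₀)) + ∫ r in t₀..s, f r) (f s))
      (fun s => fderiv ℝ φ (S s t (e₂ (x s))) (S s t (y s))) (Ioo t₀ t) := fun s hs => by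
    dsimp only
    rw [← hrestart s ⟨hs.1.le, hs.2.le⟩, ← hz s ⟨hτt₀.trans hs.1.le, hs.2⟩]
  have hft : IntervalIntegrable f volume t₀ t :=
    hf.mono_set (uIcc_subset_uIcc (mem_uIcc_of_le hτt₀ hlt.le) right_mem_uIcc)
  have hφ₁ : ContDiff ℝ 1 φ := hφ.of_le one_le_two
  refine ⟨((intervalIntegrable_iff_integrableOn_Ioo_of_le hlt.le).1
    (hφ₁.intervalIntegrable_fderiv_add_integral_apply hft _)).congr_fun hpath measurableSet_Ioo, ?_⟩
  rw [hxt, ← sub_eq_iff_eq_add', hφ₁.apply_add_integral_sub_apply hft,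
    intervalIntegral.integral_of_le hlt.le, integral_Ioc_eq_integral_Ioo]
  exact setIntegral_congr_fun measurableSet_Ioo hpath

/-- **Mild chain rule** (Example 2; the deterministic case of the mild Itô formula).
In the deterministic mild-process setting, for a twice continuously Fréchet differentiable
`φ : Ȟ → V` and `t₀ < t` in `I`, the function `s ↦ φ'(S_{s,t} x_s)(S_{s,t} y_s)` is Bochner
integrable on `(t₀, t)` and
`φ(x_t) = φ(S_{t₀,t} x_{t₀}) + ∫_{t₀}^{t} φ'(S_{s,t} x_s)(S_{s,t} y_s) ds`. -/
theorem mild_chain_rule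
    {Hv Ht Hh V : Type*}
    [NormedAddCommGroup Hv] [InnerProductSpace ℝ Hv] [CompleteSpace Hv]
    [SecondCountableTopology Hv] [MeasurableSpace Hv] [BorelSpace Hv]
    [NormedAddCommGroup Ht] [InnerProductSpace ℝ Ht] [CompleteSpace Ht]
    [SecondCountableTopology Ht] [MeasurableSpace Ht] [BorelSpace Ht]
    [NormedAddCommGroup Hh] [InnerProductSpace ℝ Hh] [CompleteSpace Hh]
    [SecondCountableTopology Hh] [MeasurableSpace Hh] [BorelSpace Hh]
    [NormedAddCommGroup V] [InnerProductSpace ℝ V] [CompleteSpace V]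
    [SecondCountableTopology V]
    -- the time set `I ⊆ [0,∞)`, closed and convex with nonempty interior, and `τ = inf I`
    (I : Set ℝ) (hI0 : I ⊆ Ici (0 : ℝ)) (hIclosed : IsClosed I)
    (hIconv : Convex ℝ I) (hIint : (interior I).Nonempty)
    (τ : ℝ) (hτ : IsGLB I τ)
    -- continuous dense embeddings `Ȟ ⊆ H̃ ⊆ Ĥ`
    (e₁ : Hv →L[ℝ] Ht) (he₁ : Function.Injective e₁) (he₁d : DenseRange e₁)
    (e₂ : Ht →L[ℝ] Hh) (he₂ : Function.Injective e₂) (he₂d : DenseRange e₂)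
    -- the semigroup `S`
    (S : ℝ → ℝ → (Hh →L[ℝ] Hv))
    (hS_comp : ∀ t₁ t₂ t₃, t₁ ∈ I → t₂ ∈ I → t₃ ∈ I → t₁ < t₂ → t₂ < t₃ →
      ∀ v : Hh, S t₂ t₃ (e₂ (e₁ (S t₁ t₂ v))) = S t₁ t₃ v)
    (hS_meas : ∀ v : Hh, Measurable fun p : ℝ × ℝ => S p.1 p.2 v)
    -- the mild process `x` with mild drift `y`; `xv t` realizes `x t ∈ Ȟ` for `t > τ`
    (x : ℝ → Ht) (hx : Measurable x)
    (y : ℝ → Hh) (hy : Measurable y)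
    (xv : ℝ → Hv) (hxv : ∀ t ∈ I, τ < t → e₁ (xv t) = x t)
    (hInt : ∀ t ∈ I, IntegrableOn (fun s => S s t (y s)) (Ioo τ t))
    (hMild : ∀ t ∈ I, τ < t →
      xv t = S τ t (e₂ (x τ)) + ∫ s in Ioo τ t, S s t (y s))
    -- the test function
    (φ : Hv → V) (hφ : ContDiff ℝ 2 φ)
    (t₀ t : ℝ) (ht₀ : t₀ ∈ I) (ht : t ∈ I) (hlt : t₀ < t) :
    IntegrableOn (fun s => fderiv ℝ φ (S s t (e₂ (x s))) (S s t (y s))) (Ioo t₀ t) ∧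
    φ (xv t) =
      φ (S t₀ t (e₂ (x t₀))) +
        ∫ s in Ioo t₀ t, fderiv ℝ φ (S s t (e₂ (x s))) (S s t (y s)) :=
  mild_chain_rule_general I hIclosed hIconv τ hτ e₁ e₂ S hS_comp x y xv hxv hInt hMild φ hφ t₀ t ht₀
    ht hlt
end

section
/- Time-dependent deterministic mild Itô formula (Theorem 1 with vanishing mild diffusion). In the deterministic mild-process setting, let V be a separable real Hilbert space and let φ : I × Ȟ → V be continuous with continuous partial Fréchet derivatives ∂₁φ : I × Ȟ → V, ∂₂φ : I × Ȟ → L(Ȟ,V) and ∂₂²φ : I × Ȟ → L^{(2)}(Ȟ,V). Then for all t₀, t ∈ I with t₀ < t one has ∫_{t₀}^{t} ‖∂₁φ(s, S_{s,t} x_s)‖_V ds < ∞ and ∫_{t₀}^{t} ‖∂₂φ(s, S_{s,t} x_s)(S_{s,t} y_s)‖_V ds < ∞, and φ(t, x_t) = φ(t₀, S_{t₀,t} x_{t₀}) + ∫_{t₀}^{t} ∂₁φ(s, S_{s,t} x_s) ds + ∫_{t₀}^{t} ∂₂φ(s, S_{s,t} x_s)(S_{s,t} y_s) ds. -/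
/-!
The semigroup property turns the mild equation into an integral equation: on `[τ, t]` the curve
`u s := S_{s,t} x_s` satisfies `u s = u τ + ∫_τ^s S_{r,t} y_r dr`, and `u t = x_t`. The formula is
then a chain rule for `s ↦ φ(s, u s)` along a curve that is merely an indefinite Bochner integral.
At interior times `φ` is jointly Fréchet differentiable because its partial derivatives are
continuous; together with the continuity of the derivative along the curve this makes the defect
`φ(q, u q) - φ(s, u s) - ∫_s^q (∂₁φ(r, u r) + ∂₂φ(r, u r) (S_{r,t} y_r)) dr` of order
`o(∫_s^q (1 + ‖S_{r,t} y_r‖) dr)` as `q ↓ s`. A continuous induction shows that a continuous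
function whose increments are this small relative to a continuous weight is constant.
-/

open MeasureTheory Set Filter Topology

theorem IntervalIntegrable.continuousOn_apply {E F : Type*}
    [NormedAddCommGroup E] [NormedSpace ℝ E] [NormedAddCommGroup F] [NormedSpace ℝ F]
    {L : ℝ → E →L[ℝ] F} {g : ℝ → E} {a b : ℝ}
    (hg : IntervalIntegrable g volume a b) (hL : ContinuousOn L (uIcc a b)) :
    IntervalIntegrable (fun r => L r (g r)) volume a b := by
  rw [intervalIntegrable_iff] at hg ⊢
  obtain ⟨C, hC⟩ := isCompact_uIcc.exists_bound_of_continuousOn hL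
  exact (ContinuousLinearMap.id ℝ (E →L[ℝ] F)).integrable_of_bilin_of_bdd_left C
    ((hL.mono uIoc_subset_uIcc).aestronglyMeasurable measurableSet_uIoc)
    (ae_restrict_of_forall_mem measurableSet_uIoc fun r hr => hC r (uIoc_subset_uIcc hr)) hg

theorem IntervalIntegrable.continuousOn_primitive_Icc {E : Type*} [NormedAddCommGroup E]
    [NormedSpace ℝ E] {f : ℝ → E} {a b : ℝ} (hf : IntervalIntegrable f volume a b)
    (hab : a ≤ b) : ContinuousOn (fun s => ∫ r in a..s, f r) (Icc a b) := by
  simpa [uIcc_of_le hab] using intervalIntegral.continuousOn_primitive_interval' hf left_mem_uIcc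

theorem IntervalIntegrable.integrableOn_Ioo_and_setIntegral_eq_of_eqOn {E : Type*}
    [NormedAddCommGroup E] [NormedSpace ℝ E] {f g : ℝ → E} {a b : ℝ} (hab : a ≤ b)
    (hf : IntervalIntegrable f volume a b) (hfg : EqOn f g (Ioo a b)) :
    IntegrableOn g (Ioo a b) ∧ ∫ s in Ioo a b, g s = ∫ s in a..b, f s := by
  refine ⟨(hf.1.mono_set Ioo_subset_Ioc_self).congr_fun hfg measurableSet_Ioo, ?_⟩
  rw [intervalIntegral.integral_of_le hab, integral_Ioc_eq_integral_Ioo]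
  exact (setIntegral_congr_fun measurableSet_Ioo hfg).symm

theorem eq_of_forall_Ico_eventually_norm_sub_le {E : Type*} [NormedAddCommGroup E]
    {F : ℝ → E} {w : ℝ → ℝ} {a b : ℝ} (hab : a ≤ b)
    (hF : ContinuousOn F (Icc a b)) (hw : ContinuousOn w (Icc a b))
    (h : ∀ s ∈ Ico a b, ∀ ε > 0, ∀ᶠ q in 𝓝[>] s, ‖F q - F s‖ ≤ ε * (w q - w s)) :
    F b = F a := by
  have bound : ∀ ε > 0, ‖F b - F a‖ ≤ ε * (w b - w a) := by
    intro ε hε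
    set T := {s | ‖F s - F a‖ ≤ ε * (w s - w a)}
    have hT : IsClosed (T ∩ Icc a b) := by
      rw [inter_comm]
      exact ((hF.sub continuousOn_const).norm.prodMk
        ((hw.sub continuousOn_const).const_smul ε)).preimage_isClosed_of_isClosed isClosed_Icc
        (isClosed_le continuous_fst continuous_snd)
    refine hT.Icc_subset_of_forall_mem_nhdsWithin (by simp [T]) ?_ (right_mem_Icc.2 hab)
    rintro s ⟨hsT, hs⟩
    filter_upwards [h s hs ε hε] with q hq
    calc ‖F q - F a‖ ≤ ‖F q - F s‖ + ‖F s - F a‖ := norm_sub_le_norm_sub_add_norm_sub _ _ _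
      _ ≤ ε * (w q - w s) + ε * (w s - w a) := add_le_add hq hsT
      _ = ε * (w q - w a) := by ring
  have hlim : Tendsto (fun ε => ε * (w b - w a)) (𝓝[>] 0) (𝓝 0) := by
    simpa using ((continuous_mul_const (w b - w a)).tendsto 0).mono_left nhdsWithin_le_nhds
  exact sub_eq_zero.1 <| norm_le_zero_iff.1 <|
    ge_of_tendsto hlim (eventually_nhdsWithin_of_forall bound)

theorem eq_of_forall_Ioo_eventually_norm_sub_le {E : Type*} [NormedAddCommGroup E]
    {F : ℝ → E} {w : ℝ → ℝ} {a b : ℝ} (hab : a ≤ b)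
    (hF : ContinuousOn F (Icc a b)) (hw : ContinuousOn w (Icc a b))
    (h : ∀ s ∈ Ioo a b, ∀ ε > 0, ∀ᶠ q in 𝓝[>] s, ‖F q - F s‖ ≤ ε * (w q - w s)) :
    F b = F a := by
  rcases hab.eq_or_lt with rfl | hab
  · rfl
  have hinner : ∀ a' ∈ Ioo a b, F b = F a' := fun a' ha' =>
    eq_of_forall_Ico_eventually_norm_sub_le ha'.2.le
      (hF.mono (Icc_subset_Icc_left ha'.1.le)) (hw.mono (Icc_subset_Icc_left ha'.1.le))
      fun s hs => h s ⟨ha'.1.trans_le hs.1, hs.2⟩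
  have hcont : Tendsto F (𝓝[>] a) (𝓝 (F a)) := by
    rw [← nhdsWithin_Ioo_eq_nhdsGT hab]
    exact (hF a (left_mem_Icc.2 hab.le)).mono Ioo_subset_Icc_self
  refine tendsto_nhds_unique (tendsto_const_nhds.congr' ?_) hcont
  filter_upwards [Ioo_mem_nhdsGT hab] with a' ha' using hinner a' ha'

theorem norm_sub_sub_integral_le {E F : Type*}
    [NormedAddCommGroup E] [NormedSpace ℝ E] [CompleteSpace E]
    [NormedAddCommGroup F] [NormedSpace ℝ F] [CompleteSpace F]
    {Φ : E → F} {L : ℝ → E →L[ℝ] F} {γ γ' : ℝ → E} {s q c₁ c₂ : ℝ} (hsq : s ≤ q)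
    (hγ' : IntervalIntegrable γ' volume s q) (hγ : γ q - γ s = ∫ r in s..q, γ' r)
    (hLγ' : IntervalIntegrable (fun r => L r (γ' r)) volume s q)
    (hΦ : ‖Φ (γ q) - Φ (γ s) - L s (γ q - γ s)‖ ≤ c₁ * ‖γ q - γ s‖) (hc₁ : 0 ≤ c₁)
    (hL : ∀ r ∈ Ioc s q, ‖L s - L r‖ ≤ c₂) :
    ‖Φ (γ q) - Φ (γ s) - ∫ r in s..q, L r (γ' r)‖ ≤ (c₁ + c₂) * ∫ r in s..q, ‖γ' r‖ := by
  have hsplit : Φ (γ q) - Φ (γ s) - ∫ r in s..q, L r (γ' r)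
      = (Φ (γ q) - Φ (γ s) - L s (γ q - γ s)) + ∫ r in s..q, (L s - L r) (γ' r) := by
    simp only [sub_apply]
    rw [intervalIntegral.integral_sub (hγ'.continuousOn_apply continuousOn_const) hLγ',
      (L s).intervalIntegral_comp_comm hγ', ← hγ]
    abel
  have hincr : ‖γ q - γ s‖ ≤ ∫ r in s..q, ‖γ' r‖ :=
    hγ ▸ intervalIntegral.norm_integral_le_integral_norm hsq
  have hrest : ‖∫ r in s..q, (L s - L r) (γ' r)‖ ≤ c₂ * ∫ r in s..q, ‖γ' r‖ := by
    rw [← intervalIntegral.integral_const_mul]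
    refine intervalIntegral.norm_integral_le_of_norm_le hsq (ae_of_all _ fun r hr => ?_)
      (hγ'.norm.const_mul _)
    exact ((L s - L r).le_opNorm _).trans (mul_le_mul_of_nonneg_right (hL r hr) (norm_nonneg _))
  rw [hsplit, add_mul]
  exact (norm_add_le _ _).trans (add_le_add (hΦ.trans (by gcongr)) hrest)

theorem integral_eq_sub_of_hasFDerivAt_of_eq_add_integral {E F : Type*}
    [NormedAddCommGroup E] [NormedSpace ℝ E] [CompleteSpace E]
    [NormedAddCommGroup F] [NormedSpace ℝ F] [CompleteSpace F]
    {Φ : E → F} {L : ℝ → E →L[ℝ] F} {γ γ' : ℝ → E} {a b : ℝ} (hab : a ≤ b)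
    (hγ' : IntervalIntegrable γ' volume a b)
    (hγ : ∀ s ∈ Icc a b, γ s = γ a + ∫ r in a..s, γ' r)
    (hΦ : ∀ s ∈ Ioo a b, HasFDerivAt Φ (L s) (γ s))
    (hΦγ : ContinuousOn (fun s => Φ (γ s)) (Icc a b)) (hL : ContinuousOn L (Icc a b)) :
    ∫ s in a..b, L s (γ' s) = Φ (γ b) - Φ (γ a) := by
  have hsub : ∀ {c d}, c ∈ Icc a b → d ∈ Icc a b → uIcc c d ⊆ uIcc a b := fun hc hd =>
    uIcc_subset_uIcc (uIcc_of_le hab ▸ hc) (uIcc_of_le hab ▸ hd)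
  have ha : a ∈ Icc a b := left_mem_Icc.2 hab
  have hLγ' : IntervalIntegrable (fun r => L r (γ' r)) volume a b :=
    hγ'.continuousOn_apply (uIcc_of_le hab ▸ hL)
  have hγc : ContinuousOn γ (Icc a b) :=
    (continuousOn_const.add (hγ'.continuousOn_primitive_Icc hab)).congr hγ
  set D : ℝ → F := fun s => Φ (γ s) - ∫ r in a..s, L r (γ' r)
  suffices hD : D b = D a by
    simp only [D, intervalIntegral.integral_same, sub_zero] at hD
    rw [← hD, sub_sub_cancel]
  refine eq_of_forall_Ioo_eventually_norm_sub_le hab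
    (hΦγ.sub (hLγ'.continuousOn_primitive_Icc hab)) (hγ'.norm.continuousOn_primitive_Icc hab)
    fun s hs ε hε => ?_
  have hsI : s ∈ Icc a b := Ioo_subset_Icc_self hs
  have hΦs : ∀ᶠ q in 𝓝 s, ‖Φ (γ q) - Φ (γ s) - L s (γ q - γ s)‖ ≤ ε / 2 * ‖γ q - γ s‖ :=
    (hγc.continuousAt (Icc_mem_nhds hs.1 hs.2)).eventually ((hΦ s hs).isLittleO.def (half_pos hε))
  obtain ⟨δ, hδ, hLs⟩ := Metric.continuousAt_iff.1
    (hL.continuousAt (Icc_mem_nhds hs.1 hs.2)) (ε / 2) (half_pos hε)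
  filter_upwards [nhdsWithin_le_nhds hΦs, Ioo_mem_nhdsGT (lt_min hs.2 (lt_add_of_pos_right s hδ))]
    with q hΦq hq
  have hqI : q ∈ Icc a b := ⟨hsI.1.trans hq.1.le, (hq.2.trans_le (min_le_left _ _)).le⟩
  have hDw : D q - D s = Φ (γ q) - Φ (γ s) - ∫ r in s..q, L r (γ' r) := by
    rw [← intervalIntegral.integral_interval_sub_left (hLγ'.mono_set (hsub ha hqI))
      (hLγ'.mono_set (hsub ha hsI))]
    simp only [D]
    abel
  rw [hDw, intervalIntegral.integral_interval_sub_left (hγ'.norm.mono_set (hsub ha hqI))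
    (hγ'.norm.mono_set (hsub ha hsI)), ← add_halves ε]
  refine norm_sub_sub_integral_le hq.1.le (hγ'.mono_set (hsub hsI hqI)) ?_
    (hLγ'.mono_set (hsub hsI hqI)) hΦq (half_pos hε).le fun r hr => ?_
  · rw [hγ q hqI, hγ s hsI, add_sub_add_left_eq_sub, intervalIntegral.integral_interval_sub_left
      (hγ'.mono_set (hsub ha hqI)) (hγ'.mono_set (hsub ha hsI))]
  · rw [← dist_eq_norm, dist_comm]
    refine (hLs ?_).le
    rw [Real.dist_eq, abs_of_pos (sub_pos.2 hr.1)]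
    linarith [hr.2, hq.2.trans_le (min_le_right _ _)]

open ContinuousLinearMap in
theorem hasFDerivAt_uncurry_of_continuousOn_partials {E F : Type*}
    [NormedAddCommGroup E] [NormedSpace ℝ E] [NormedAddCommGroup F] [NormedSpace ℝ F]
    {I : Set ℝ} {f f₁ : ℝ → E → F} {f₂ : ℝ → E → E →L[ℝ] F}
    (hf₁ : ∀ s ∈ I, ∀ v, HasDerivWithinAt (fun r => f r v) (f₁ s v) I s)
    (hf₁_cont : ContinuousOn (fun p : ℝ × E => f₁ p.1 p.2) (I ×ˢ univ))
    (hf₂ : ∀ s ∈ I, ∀ v, HasFDerivAt (f s) (f₂ s v) v)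
    (hf₂_cont : ContinuousOn (fun p : ℝ × E => f₂ p.1 p.2) (I ×ˢ univ))
    {s : ℝ} (hs : s ∈ interior I) (v : E) :
    HasFDerivAt (fun p : ℝ × E => f p.1 p.2)
      ((toSpanSingleton ℝ (f₁ s v)).coprod (f₂ s v)) (s, v) := by
  have hU : interior I ×ˢ univ ∈ 𝓝 (s, v) := prod_mem_nhds (isOpen_interior.mem_nhds hs) univ_mem
  have hIU : I ×ˢ univ ∈ 𝓝 (s, v) := mem_of_superset hU (prod_mono interior_subset subset_rfl)
  refine (hasStrictFDerivAt_uncurry_coprod (f₁ := fun s v => toSpanSingleton ℝ (f₁ s v))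
    ?_ ?_ ?_ (hf₂_cont.continuousAt hIU)).hasFDerivAt
  · filter_upwards [hU] with p hp
    exact ((hf₁ p.1 (interior_subset hp.1) p.2).hasDerivAt
      (mem_interior_iff_mem_nhds.1 hp.1)).hasFDerivAt
  · filter_upwards [hU] with p hp using hf₂ p.1 (interior_subset hp.1) p.2
  · exact (toSpanSingletonCLE (𝕜 := ℝ)).continuous.continuousAt.comp (hf₁_cont.continuousAt hIU)

open ContinuousLinearMap in
theorem ito_formula_of_eq_add_integral {E F : Type*}
    [NormedAddCommGroup E] [NormedSpace ℝ E] [CompleteSpace E]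
    [NormedAddCommGroup F] [NormedSpace ℝ F] [CompleteSpace F]
    {I : Set ℝ} {φ φ₁ : ℝ → E → F} {φ₂ : ℝ → E → E →L[ℝ] F}
    (hφ_cont : ContinuousOn (fun p : ℝ × E => φ p.1 p.2) (I ×ˢ univ))
    (hφ₁ : ∀ s ∈ I, ∀ v, HasDerivWithinAt (fun r => φ r v) (φ₁ s v) I s)
    (hφ₁_cont : ContinuousOn (fun p : ℝ × E => φ₁ p.1 p.2) (I ×ˢ univ))
    (hφ₂ : ∀ s ∈ I, ∀ v, HasFDerivAt (φ s) (φ₂ s v) v)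
    (hφ₂_cont : ContinuousOn (fun p : ℝ × E => φ₂ p.1 p.2) (I ×ˢ univ))
    {a b : ℝ} (hab : a ≤ b) (hI : Icc a b ⊆ I) {u g : ℝ → E}
    (hg : IntervalIntegrable g volume a b) (hu : ∀ s ∈ Icc a b, u s = u a + ∫ r in a..s, g r) :
    IntervalIntegrable (fun s => φ₁ s (u s)) volume a b ∧
    IntervalIntegrable (fun s => φ₂ s (u s) (g s)) volume a b ∧
    φ b (u b) = φ a (u a) + (∫ s in a..b, φ₁ s (u s)) + ∫ s in a..b, φ₂ s (u s) (g s) := by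
  have hgraph : ContinuousOn (fun s => (s, u s)) (Icc a b) :=
    continuousOn_id.prodMk ((continuousOn_const.add (hg.continuousOn_primitive_Icc hab)).congr hu)
  have hmaps : MapsTo (fun s => (s, u s)) (Icc a b) (I ×ˢ univ) := fun s hs => ⟨hI hs, trivial⟩
  have hφ₁u : ContinuousOn (fun s => φ₁ s (u s)) (Icc a b) := hφ₁_cont.comp hgraph hmaps
  have hφ₂u : ContinuousOn (fun s => φ₂ s (u s)) (Icc a b) := hφ₂_cont.comp hgraph hmaps
  have hint₁ := hφ₁u.intervalIntegrable_of_Icc (μ := volume) hab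
  have hint₂ := hg.continuousOn_apply (uIcc_of_le hab ▸ hφ₂u)
  have hpair : IntervalIntegrable (fun s => ((1 : ℝ), g s)) volume a b :=
    ⟨intervalIntegrable_const.1.prodMk hg.1, intervalIntegrable_const.2.prodMk hg.2⟩
  refine ⟨hint₁, hint₂, ?_⟩
  have key := integral_eq_sub_of_hasFDerivAt_of_eq_add_integral
    (Φ := fun p : ℝ × E => φ p.1 p.2) (γ := fun s => (s, u s)) (γ' := fun s => ((1 : ℝ), g s))
    (L := fun s => (toSpanSingleton ℝ (φ₁ s (u s))).coprod (φ₂ s (u s))) hab hpair ?_ ?_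
    (hφ_cont.comp hgraph hmaps) ?_
  · simp only [coprod_apply, toSpanSingleton_apply, one_smul] at key
    rw [add_assoc, ← intervalIntegral.integral_add hint₁ hint₂, key]
    abel
  · intro s hs
    have hsub := hpair.mono_set (uIcc_subset_uIcc_left (uIcc_of_le hab ▸ hs))
    ext
    · have h := (fst ℝ ℝ E).intervalIntegral_comp_comm hsub
      simp only [coe_fst', intervalIntegral.integral_const, smul_eq_mul, mul_one] at h
      simp [← h]
    · simpa [hu s hs] using (snd ℝ ℝ E).intervalIntegral_comp_comm hsub
  · exact fun s hs => hasFDerivAt_uncurry_of_continuousOn_partials hφ₁ hφ₁_cont hφ₂ hφ₂_cont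
      (interior_mono hI (by rwa [interior_Icc])) (u s)
  · exact ((coprodEquivL (S := ℝ)).continuous.comp_continuousOn
      (((toSpanSingletonCLE (𝕜 := ℝ)).continuous.comp_continuousOn hφ₁u).prodMk hφ₂u)).congr
      fun _ _ => rfl

theorem semigroup_apply_mild_eq_add_integral {Hv Ht Hh : Type*}
    [NormedAddCommGroup Hv] [NormedSpace ℝ Hv] [CompleteSpace Hv]
    [NormedAddCommGroup Ht] [NormedSpace ℝ Ht] [NormedAddCommGroup Hh] [NormedSpace ℝ Hh]
    {I : Set ℝ} {e₁ : Hv →L[ℝ] Ht} {e₂ : Ht →L[ℝ] Hh} {S : ℝ → ℝ → (Hh →L[ℝ] Hv)}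
    (hS_comp : ∀ t₁ t₂ t₃, t₁ ∈ I → t₂ ∈ I → t₃ ∈ I → t₁ < t₂ → t₂ < t₃ →
      ∀ v : Hh, S t₂ t₃ (e₂ (e₁ (S t₁ t₂ v))) = S t₁ t₃ v)
    {x : ℝ → Ht} {y : ℝ → Hh} {xs : Hv} {τ s t : ℝ} (hI : Icc τ t ⊆ I) (hs : s ∈ Ioo τ t)
    (hxs : e₁ xs = x s) (hInt : IntegrableOn (fun r => S r s (y r)) (Ioo τ s))
    (hMild : xs = S τ s (e₂ (x τ)) + ∫ r in Ioo τ s, S r s (y r)) :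
    S s t (e₂ (x s)) = S τ t (e₂ (x τ)) + ∫ r in Ioo τ s, S r t (y r) := by
  set T : Hv →L[ℝ] Hv := (S s t).comp (e₂.comp e₁)
  have hT : ∀ r ∈ Ico τ s, ∀ v, T (S r s v) = S r t v := fun r hr v =>
    hS_comp r s t (hI ⟨hr.1, hr.2.trans hs.2 |>.le⟩) (hI (Ioo_subset_Icc_self hs))
      (hI (right_mem_Icc.2 (hs.1.trans hs.2).le)) hr.2 hs.2 v
  calc S s t (e₂ (x s)) = T xs := by rw [← hxs]; rfl
    _ = S τ t (e₂ (x τ)) + ∫ r in Ioo τ s, S r t (y r) := by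
      rw [hMild, map_add, hT τ (left_mem_Ico.2 hs.1), ← T.integral_comp_comm hInt]
      exact congrArg _ (setIntegral_congr_fun measurableSet_Ioo fun r hr => hT r ⟨hr.1.le, hr.2⟩ _)

theorem exists_eq_add_integral_of_mild {Hv Ht Hh : Type*}
    [NormedAddCommGroup Hv] [NormedSpace ℝ Hv] [CompleteSpace Hv]
    [NormedAddCommGroup Ht] [NormedSpace ℝ Ht] [NormedAddCommGroup Hh] [NormedSpace ℝ Hh]
    {I : Set ℝ} {e₁ : Hv →L[ℝ] Ht} {e₂ : Ht →L[ℝ] Hh} {S : ℝ → ℝ → (Hh →L[ℝ] Hv)}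
    (hS_comp : ∀ t₁ t₂ t₃, t₁ ∈ I → t₂ ∈ I → t₃ ∈ I → t₁ < t₂ → t₂ < t₃ →
      ∀ v : Hh, S t₂ t₃ (e₂ (e₁ (S t₁ t₂ v))) = S t₁ t₃ v)
    {x : ℝ → Ht} {y : ℝ → Hh} {xv : ℝ → Hv} {τ t₀ t : ℝ}
    (hxv : ∀ t ∈ I, τ < t → e₁ (xv t) = x t)
    (hInt : ∀ t ∈ I, IntegrableOn (fun s => S s t (y s)) (Ioo τ t))
    (hMild : ∀ t ∈ I, τ < t → xv t = S τ t (e₂ (x τ)) + ∫ s in Ioo τ t, S s t (y s))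
    (hI : Icc τ t ⊆ I) (hτt₀ : τ ≤ t₀) (hlt : t₀ < t) :
    ∃ u : ℝ → Hv, IntervalIntegrable (fun r => S r t (y r)) volume t₀ t ∧
      (∀ s ∈ Icc t₀ t, u s = u t₀ + ∫ r in t₀..s, S r t (y r)) ∧
      (∀ s ∈ Ico t₀ t, S s t (e₂ (x s)) = u s) ∧ xv t = u t := by
  have hτt : τ < t := hτt₀.trans_lt hlt
  have ht : t ∈ I := hI (right_mem_Icc.2 hτt.le)
  set g : ℝ → Hv := fun r => S r t (y r)
  have hg : ∀ {c d}, c ∈ Icc τ t → d ∈ Icc τ t → IntervalIntegrable g volume c d :=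
    fun hc hd => ((intervalIntegrable_iff_integrableOn_Ioo_of_le hτt.le).2 (hInt t ht)).mono_set
      (uIcc_subset_uIcc (uIcc_of_le hτt.le ▸ hc) (uIcc_of_le hτt.le ▸ hd))
  have hIoo : ∀ s, τ ≤ s → ∫ r in τ..s, g r = ∫ r in Ioo τ s, S r t (y r) := fun s hs => by
    rw [intervalIntegral.integral_of_le hs, integral_Ioc_eq_integral_Ioo]
  have ht₀ : t₀ ∈ Icc τ t := ⟨hτt₀, hlt.le⟩
  refine ⟨fun s => S τ t (e₂ (x τ)) + ∫ r in τ..s, g r, hg ht₀ (right_mem_Icc.2 hτt.le),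
    fun s hs => ?_, ?_, by rw [hMild t ht hτt, ← hIoo t hτt.le]⟩
  · rw [add_assoc, intervalIntegral.integral_add_adjacent_intervals
      (hg (left_mem_Icc.2 hτt.le) ht₀) (hg ht₀ ⟨hτt₀.trans hs.1, hs.2⟩)]
  · rintro s ⟨ht₀s, hst⟩
    rcases (hτt₀.trans ht₀s).eq_or_lt with rfl | hτs
    · simp
    have hsI := hI ⟨hτs.le, hst.le⟩
    rw [semigroup_apply_mild_eq_add_integral hS_comp hI ⟨hτs, hst⟩ (hxv s hsI hτs) (hInt s hsI)
      (hMild s hsI hτs), ← hIoo s hτs.le]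

theorem mild_ito_formula_deterministic_general
    {Hv Ht Hh V : Type*}
    [NormedAddCommGroup Hv] [InnerProductSpace ℝ Hv] [CompleteSpace Hv]
    [NormedAddCommGroup Ht] [InnerProductSpace ℝ Ht]
    [NormedAddCommGroup Hh] [InnerProductSpace ℝ Hh]
    [NormedAddCommGroup V] [InnerProductSpace ℝ V] [CompleteSpace V]
    -- the time set `I ⊆ [0,∞)`, closed and convex with nonempty interior, and `τ = inf I`
    (I : Set ℝ) (hIclosed : IsClosed I)
    (hIconv : Convex ℝ I)
    (τ : ℝ) (hτ : IsGLB I τ)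
    -- continuous dense embeddings `Ȟ ⊆ H̃ ⊆ Ĥ`
    (e₁ : Hv →L[ℝ] Ht)
    (e₂ : Ht →L[ℝ] Hh)
    -- the semigroup `S`
    (S : ℝ → ℝ → (Hh →L[ℝ] Hv))
    (hS_comp : ∀ t₁ t₂ t₃, t₁ ∈ I → t₂ ∈ I → t₃ ∈ I → t₁ < t₂ → t₂ < t₃ →
      ∀ v : Hh, S t₂ t₃ (e₂ (e₁ (S t₁ t₂ v))) = S t₁ t₃ v)
    -- the mild process `x` with mild drift `y`; `xv t` realizes `x t ∈ Ȟ` for `t > τ`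
    (x : ℝ → Ht)
    (y : ℝ → Hh)
    (xv : ℝ → Hv) (hxv : ∀ t ∈ I, τ < t → e₁ (xv t) = x t)
    (hInt : ∀ t ∈ I, IntegrableOn (fun s => S s t (y s)) (Ioo τ t))
    (hMild : ∀ t ∈ I, τ < t →
      xv t = S τ t (e₂ (x τ)) + ∫ s in Ioo τ t, S s t (y s))
    -- the test function `φ : I × Ȟ → V` with its continuous partial Fréchet derivatives
    (φ : ℝ → Hv → V)
    (φ₁ : ℝ → Hv → V) (φ₂ : ℝ → Hv → (Hv →L[ℝ] V))
    (hφ_cont : ContinuousOn (fun p : ℝ × Hv => φ p.1 p.2) (I ×ˢ (univ : Set Hv)))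
    (hφ₁ : ∀ s ∈ I, ∀ v : Hv, HasDerivWithinAt (fun r => φ r v) (φ₁ s v) I s)
    (hφ₁_cont : ContinuousOn (fun p : ℝ × Hv => φ₁ p.1 p.2) (I ×ˢ (univ : Set Hv)))
    (hφ₂ : ∀ s ∈ I, ∀ v : Hv, HasFDerivAt (φ s) (φ₂ s v) v)
    (hφ₂_cont : ContinuousOn (fun p : ℝ × Hv => φ₂ p.1 p.2) (I ×ˢ (univ : Set Hv)))
    (t₀ t : ℝ) (ht₀ : t₀ ∈ I) (ht : t ∈ I) (hlt : t₀ < t) :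
    IntegrableOn (fun s => φ₁ s (S s t (e₂ (x s)))) (Ioo t₀ t) ∧
    IntegrableOn (fun s => φ₂ s (S s t (e₂ (x s))) (S s t (y s))) (Ioo t₀ t) ∧
    φ t (xv t) =
      φ t₀ (S t₀ t (e₂ (x t₀)))
        + (∫ s in Ioo t₀ t, φ₁ s (S s t (e₂ (x s))))
        + ∫ s in Ioo t₀ t, φ₂ s (S s t (e₂ (x s))) (S s t (y s)) := by
  have hτI : τ ∈ I := hτ.mem_of_isClosed ⟨t, ht⟩ hIclosed
  have hτt₀ : τ ≤ t₀ := hτ.1 ht₀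
  obtain ⟨u, hg, hu, hxu, hut⟩ := exists_eq_add_integral_of_mild hS_comp hxv hInt hMild
    (hIconv.ordConnected.out hτI ht) hτt₀ hlt
  obtain ⟨h₁, h₂, hito⟩ := ito_formula_of_eq_add_integral hφ_cont hφ₁ hφ₁_cont hφ₂ hφ₂_cont
    hlt.le (hIconv.ordConnected.out ht₀ ht) hg hu
  obtain ⟨hi₁, he₁⟩ := h₁.integrableOn_Ioo_and_setIntegral_eq_of_eqOn hlt.le
    fun s hs => congrArg (φ₁ s) (hxu s (Ioo_subset_Ico_self hs)).symm
  obtain ⟨hi₂, he₂⟩ := h₂.integrableOn_Ioo_and_setIntegral_eq_of_eqOn hlt.le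
    fun s hs => congrArg₂ (φ₂ s · ·) (hxu s (Ioo_subset_Ico_self hs)).symm rfl
  refine ⟨hi₁, hi₂, ?_⟩
  rw [hut, hxu t₀ (left_mem_Ico.2 hlt), he₁, he₂, hito]

/-- **Time-dependent deterministic mild Itô formula** (Theorem 1 with vanishing mild diffusion).
In the deterministic mild-process setting, for `φ ∈ C^{1,2}(I × Ȟ, V)` (with continuous partial
Fréchet derivatives `∂₁φ`, `∂₂φ`, `∂₂²φ`) and `t₀ < t` in `I`, the functions
`s ↦ ∂₁φ(s, S_{s,t} x_s)` and `s ↦ ∂₂φ(s, S_{s,t} x_s)(S_{s,t} y_s)` are Bochner integrable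
on `(t₀,t)` and
`φ(t, x_t) = φ(t₀, S_{t₀,t} x_{t₀}) + ∫ ∂₁φ(s, S_{s,t} x_s) ds + ∫ ∂₂φ(s, S_{s,t} x_s)(S_{s,t} y_s) ds`. -/
theorem mild_ito_formula_deterministic
    {Hv Ht Hh V : Type*}
    [NormedAddCommGroup Hv] [InnerProductSpace ℝ Hv] [CompleteSpace Hv]
    [SecondCountableTopology Hv] [MeasurableSpace Hv] [BorelSpace Hv]
    [NormedAddCommGroup Ht] [InnerProductSpace ℝ Ht] [CompleteSpace Ht]
    [SecondCountableTopology Ht] [MeasurableSpace Ht] [BorelSpace Ht]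
    [NormedAddCommGroup Hh] [InnerProductSpace ℝ Hh] [CompleteSpace Hh]
    [SecondCountableTopology Hh] [MeasurableSpace Hh] [BorelSpace Hh]
    [NormedAddCommGroup V] [InnerProductSpace ℝ V] [CompleteSpace V]
    [SecondCountableTopology V]
    -- the time set `I ⊆ [0,∞)`, closed and convex with nonempty interior, and `τ = inf I`
    (I : Set ℝ) (hI0 : I ⊆ Ici (0 : ℝ)) (hIclosed : IsClosed I)
    (hIconv : Convex ℝ I) (hIint : (interior I).Nonempty)
    (τ : ℝ) (hτ : IsGLB I τ)
    -- continuous dense embeddings `Ȟ ⊆ H̃ ⊆ Ĥ`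
    (e₁ : Hv →L[ℝ] Ht) (he₁ : Function.Injective e₁) (he₁d : DenseRange e₁)
    (e₂ : Ht →L[ℝ] Hh) (he₂ : Function.Injective e₂) (he₂d : DenseRange e₂)
    -- the semigroup `S`
    (S : ℝ → ℝ → (Hh →L[ℝ] Hv))
    (hS_comp : ∀ t₁ t₂ t₃, t₁ ∈ I → t₂ ∈ I → t₃ ∈ I → t₁ < t₂ → t₂ < t₃ →
      ∀ v : Hh, S t₂ t₃ (e₂ (e₁ (S t₁ t₂ v))) = S t₁ t₃ v)
    (hS_meas : ∀ v : Hh, Measurable fun p : ℝ × ℝ => S p.1 p.2 v)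
    -- the mild process `x` with mild drift `y`; `xv t` realizes `x t ∈ Ȟ` for `t > τ`
    (x : ℝ → Ht) (hx : Measurable x)
    (y : ℝ → Hh) (hy : Measurable y)
    (xv : ℝ → Hv) (hxv : ∀ t ∈ I, τ < t → e₁ (xv t) = x t)
    (hInt : ∀ t ∈ I, IntegrableOn (fun s => S s t (y s)) (Ioo τ t))
    (hMild : ∀ t ∈ I, τ < t →
      xv t = S τ t (e₂ (x τ)) + ∫ s in Ioo τ t, S s t (y s))
    -- the test function `φ : I × Ȟ → V` with its continuous partial Fréchet derivatives
    (φ : ℝ → Hv → V)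
    (φ₁ : ℝ → Hv → V) (φ₂ : ℝ → Hv → (Hv →L[ℝ] V))
    (φ₂₂ : ℝ → Hv → (Hv →L[ℝ] Hv →L[ℝ] V))
    (hφ_cont : ContinuousOn (fun p : ℝ × Hv => φ p.1 p.2) (I ×ˢ (univ : Set Hv)))
    (hφ₁ : ∀ s ∈ I, ∀ v : Hv, HasDerivWithinAt (fun r => φ r v) (φ₁ s v) I s)
    (hφ₁_cont : ContinuousOn (fun p : ℝ × Hv => φ₁ p.1 p.2) (I ×ˢ (univ : Set Hv)))
    (hφ₂ : ∀ s ∈ I, ∀ v : Hv, HasFDerivAt (φ s) (φ₂ s v) v)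
    (hφ₂_cont : ContinuousOn (fun p : ℝ × Hv => φ₂ p.1 p.2) (I ×ˢ (univ : Set Hv)))
    (hφ₂₂ : ∀ s ∈ I, ∀ v : Hv, HasFDerivAt (φ₂ s) (φ₂₂ s v) v)
    (hφ₂₂_cont : ContinuousOn (fun p : ℝ × Hv => φ₂₂ p.1 p.2) (I ×ˢ (univ : Set Hv)))
    (t₀ t : ℝ) (ht₀ : t₀ ∈ I) (ht : t ∈ I) (hlt : t₀ < t) :
    IntegrableOn (fun s => φ₁ s (S s t (e₂ (x s)))) (Ioo t₀ t) ∧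
    IntegrableOn (fun s => φ₂ s (S s t (e₂ (x s))) (S s t (y s))) (Ioo t₀ t) ∧
    φ t (xv t) =
      φ t₀ (S t₀ t (e₂ (x t₀)))
        + (∫ s in Ioo t₀ t, φ₁ s (S s t (e₂ (x s))))
        + ∫ s in Ioo t₀ t, φ₂ s (S s t (e₂ (x s))) (S s t (y s)) :=
  mild_ito_formula_deterministic_general I hIclosed hIconv τ hτ e₁ e₂ S hS_comp x y xv hxv hInt
    hMild φ φ₁ φ₂ hφ_cont hφ₁ hφ₁_cont hφ₂ hφ₂_cont t₀ t ht₀ ht hlt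
end

section
/- Mild integration by parts (Example 1, deterministic case). Let (I, τ, Ȟ ⊆ H̃ ⊆ Ĥ, S, x, y) and (I, τ, Ȟ' ⊆ H̃' ⊆ Ĥ', 𝒮, 𝓍, 𝓎) each be a deterministic mild-process setting (with the same time set I), let V be a separable real Hilbert space and let φ : Ȟ × Ȟ' → V be a bounded bilinear map. Then for all t₀, t ∈ I with t₀ < t, φ(x_t, 𝓍_t) = φ(S_{t₀,t} x_{t₀}, 𝒮_{t₀,t} 𝓍_{t₀}) + ∫_{t₀}^{t} φ(S_{s,t} y_s, 𝒮_{s,t} 𝓍_s) ds + ∫_{t₀}^{t} φ(S_{s,t} x_s, 𝒮_{s,t} 𝓎_s) ds, where both integrands are Bochner integrable on (t₀,t). -/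
open MeasureTheory Set

/-! The semigroup law lets the mild formula be restarted at `t₀` and propagated: for
`t₀ < s < t`, `S_{s,t} x_s = A + ∫_{t₀}^{s} f` with `A = S_{t₀,t} x_{t₀}` and `f = S_{·,t} y`, and
likewise `𝒮_{s,t} 𝓍_s = A' + ∫_{t₀}^{s} f'`. The claim thus becomes integration by parts for the
primitives `A + ∫ f` and `A' + ∫ f'`, whose only nontrivial part is
`φ(∫ f, ∫ f') = ∫ φ(∫_{t₀}^{s} f, f' s) ds + ∫ φ(f s, ∫_{t₀}^{s} f') ds`: Fubini on the square
`(t₀,t)²`, cut along the diagonal. -/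

section Square

variable {G : Type*} [NormedAddCommGroup G] [NormedSpace ℝ G]
  {F : ℝ × ℝ → G} {a b : ℝ}

lemma setIntegral_Ioo_eq_add {f : ℝ → G} {c : ℝ} (hab : a < b) (hbc : b ≤ c)
    (hf : IntegrableOn f (Ioo a c)) :
    ∫ s in Ioo a c, f s = (∫ s in Ioo a b, f s) + ∫ s in Ioo b c, f s := by
  have hunion := Ioo_union_Ico_eq_Ioo hab hbc
  rw [← hunion] at hf
  rw [← hunion, setIntegral_union (Ico_disjoint_Ico_same.mono_left Ioo_subset_Ico_self)
    measurableSet_Ico (hf.mono_set subset_union_left) (hf.mono_set subset_union_right),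
    integral_Ico_eq_integral_Ioo]

lemma setIntegral_Ioo_indicator_lt_left {r : ℝ} (hr : r ≤ b) :
    ∫ s in Ioo a b, {p : ℝ × ℝ | p.1 < p.2}.indicator F (s, r) = ∫ s in Ioo a r, F (s, r) := by
  have hslice : (fun s => {p : ℝ × ℝ | p.1 < p.2}.indicator F (s, r))
      = (Iio r).indicator (fun s => F (s, r)) := by
    ext s; by_cases h : s < r <;> simp [h]
  rw [hslice, setIntegral_indicator measurableSet_Iio, Ioo_inter_Iio, min_eq_right hr]

lemma setIntegral_Ioo_indicator_not_lt_right {s : ℝ} (hs : s < b) :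
    ∫ r in Ioo a b, {p : ℝ × ℝ | p.1 < p.2}ᶜ.indicator F (s, r) = ∫ r in Ioc a s, F (s, r) := by
  have hslice : (fun r => {p : ℝ × ℝ | p.1 < p.2}ᶜ.indicator F (s, r))
      = (Iic s).indicator (fun r => F (s, r)) := by
    ext r; by_cases h : r ≤ s <;> simp [h]
  have hinter : Ioo a b ∩ Iic s = Ioc a s := by
    ext r; simp only [mem_inter_iff, mem_Ioo, mem_Iic, mem_Ioc]
    exact ⟨fun h => ⟨h.1.1, h.2⟩, fun h => ⟨⟨h.1, h.2.trans_lt hs⟩, h.2⟩⟩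
  rw [hslice, setIntegral_indicator measurableSet_Iic, hinter]

lemma integral_square_Ioo_eq_triangles (hF : Integrable F ((volume.restrict (Ioo a b)).prod
      (volume.restrict (Ioo a b)))) :
    IntegrableOn (fun r => ∫ s in Ioo a r, F (s, r)) (Ioo a b) ∧
    IntegrableOn (fun s => ∫ r in Ioc a s, F (s, r)) (Ioo a b) ∧
    ∫ p, F p ∂(volume.restrict (Ioo a b)).prod (volume.restrict (Ioo a b)) =
      (∫ r in Ioo a b, ∫ s in Ioo a r, F (s, r)) + ∫ s in Ioo a b, ∫ r in Ioc a s, F (s, r) := by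
  set E : Set (ℝ × ℝ) := {p | p.1 < p.2}
  have hE : MeasurableSet E := measurableSet_lt measurable_fst measurable_snd
  have hlow := hF.indicator hE
  have hupp := hF.indicator hE.compl
  have hlow_eq : ∀ᵐ r ∂volume.restrict (Ioo a b),
      ∫ s in Ioo a b, E.indicator F (s, r) = ∫ s in Ioo a r, F (s, r) :=
    (ae_restrict_mem measurableSet_Ioo).mono fun r hr => setIntegral_Ioo_indicator_lt_left hr.2.le
  have hupp_eq : ∀ᵐ s ∂volume.restrict (Ioo a b),
      ∫ r in Ioo a b, Eᶜ.indicator F (s, r) = ∫ r in Ioc a s, F (s, r) :=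
    (ae_restrict_mem measurableSet_Ioo).mono fun s hs => setIntegral_Ioo_indicator_not_lt_right hs.2
  refine ⟨hlow.integral_prod_right.congr hlow_eq, hupp.integral_prod_left.congr hupp_eq, ?_⟩
  calc ∫ p, F p ∂_ = ∫ p, (E.indicator F + Eᶜ.indicator F) p ∂_ := by
        rw [indicator_self_add_compl]
    _ = _ := by
      rw [Pi.add_def, integral_add hlow hupp, integral_prod_symm _ hlow,
        integral_prod _ hupp, integral_congr_ae hlow_eq, integral_congr_ae hupp_eq]

end Square

section ByParts

variable {E E' G : Type*} [NormedAddCommGroup E] [NormedSpace ℝ E] [CompleteSpace E]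
  [NormedAddCommGroup E'] [NormedSpace ℝ E'] [CompleteSpace E']
  [NormedAddCommGroup G] [NormedSpace ℝ G] [CompleteSpace G]
  (φ : E →L[ℝ] E' →L[ℝ] G) {f : ℝ → E} {g : ℝ → E'} {a b : ℝ}

lemma bilinear_setIntegral_Ioo_eq_primitive_add (hf : IntegrableOn f (Ioo a b))
    (hg : IntegrableOn g (Ioo a b)) :
    IntegrableOn (fun s => φ (∫ r in Ioo a s, f r) (g s)) (Ioo a b) ∧
    IntegrableOn (fun s => φ (f s) (∫ r in Ioo a s, g r)) (Ioo a b) ∧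
    φ (∫ s in Ioo a b, f s) (∫ s in Ioo a b, g s) =
      (∫ s in Ioo a b, φ (∫ r in Ioo a s, f r) (g s)) +
        ∫ s in Ioo a b, φ (f s) (∫ r in Ioo a s, g r) := by
  have hprod : Integrable (fun p : ℝ × ℝ => φ (f p.1) (g p.2))
      ((volume.restrict (Ioo a b)).prod (volume.restrict (Ioo a b))) :=
    hf.op_fst_snd (by fun_prop) ⟨‖φ‖, φ.le_opNorm₂⟩ hg
  have hlow : EqOn (fun r => ∫ s in Ioo a r, φ (f s) (g r))
      (fun r => φ (∫ s in Ioo a r, f s) (g r)) (Ioo a b) := fun r hr =>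
    (φ.flip (g r)).integral_comp_comm (hf.mono_set (Ioo_subset_Ioo_right hr.2.le))
  have hupp : EqOn (fun s => ∫ r in Ioc a s, φ (f s) (g r))
      (fun s => φ (f s) (∫ r in Ioo a s, g r)) (Ioo a b) := fun s hs => by
    dsimp only
    rw [integral_Ioc_eq_integral_Ioo]
    exact (φ (f s)).integral_comp_comm (hg.mono_set (Ioo_subset_Ioo_right hs.2.le))
  obtain ⟨hint_low, hint_upp, hsplit⟩ := integral_square_Ioo_eq_triangles hprod
  refine ⟨hint_low.congr_fun hlow measurableSet_Ioo, hint_upp.congr_fun hupp measurableSet_Ioo, ?_⟩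
  rw [← integral_prod_bilin φ hf hg, hsplit, setIntegral_congr_fun measurableSet_Ioo hlow,
    setIntegral_congr_fun measurableSet_Ioo hupp]

theorem integration_by_parts_bilinear_primitive (A : E) (A' : E')
    (hf : IntegrableOn f (Ioo a b)) (hg : IntegrableOn g (Ioo a b)) :
    IntegrableOn (fun s => φ (f s) (A' + ∫ r in Ioo a s, g r)) (Ioo a b) ∧
    IntegrableOn (fun s => φ (A + ∫ r in Ioo a s, f r) (g s)) (Ioo a b) ∧
    φ (A + ∫ s in Ioo a b, f s) (A' + ∫ s in Ioo a b, g s) =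
      φ A A' + (∫ s in Ioo a b, φ (f s) (A' + ∫ r in Ioo a s, g r)) +
        ∫ s in Ioo a b, φ (A + ∫ r in Ioo a s, f r) (g s) := by
  obtain ⟨hint_fst, hint_snd, hprimitives⟩ := bilinear_setIntegral_Ioo_eq_primitive_add φ hf hg
  have hconst_snd : IntegrableOn (fun s => φ (f s) A') (Ioo a b) := (φ.flip A').integrable_comp hf
  have hconst_fst : IntegrableOn (fun s => φ A (g s)) (Ioo a b) := (φ A).integrable_comp hg
  have hexp_fst : (fun s => φ (f s) (A' + ∫ r in Ioo a s, g r))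
      = fun s => φ (f s) A' + φ (f s) (∫ r in Ioo a s, g r) := by
    simp only [map_add]
  have hexp_snd : (fun s => φ (A + ∫ r in Ioo a s, f r) (g s))
      = fun s => φ A (g s) + φ (∫ r in Ioo a s, f r) (g s) := by
    simp only [map_add, add_apply]
  have hpull_snd : ∫ s in Ioo a b, φ (f s) A' = φ (∫ s in Ioo a b, f s) A' :=
    (φ.flip A').integral_comp_comm hf
  have hpull_fst : ∫ s in Ioo a b, φ A (g s) = φ A (∫ s in Ioo a b, g s) :=
    (φ A).integral_comp_comm hg
  refine ⟨hexp_fst ▸ hconst_snd.add hint_snd, hexp_snd ▸ hconst_fst.add hint_fst, ?_⟩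
  rw [hexp_fst, hexp_snd, integral_add hconst_snd hint_snd, integral_add hconst_fst hint_fst,
    hpull_snd, hpull_fst]
  simp only [map_add, add_apply, hprimitives]
  abel

end ByParts

section Mild

variable {Hv Hh : Type*} [NormedAddCommGroup Hv] [NormedSpace ℝ Hv] [CompleteSpace Hv]
  [NormedAddCommGroup Hh] [NormedSpace ℝ Hh]

/-- `ι` plays the role of the embedding `Ȟ ⊆ Ĥ`. -/
def IsEvolutionFamily (I : Set ℝ) (ι : Hv →L[ℝ] Hh) (S : ℝ → ℝ → Hh →L[ℝ] Hv) : Prop :=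
  ∀ t₁ t₂ t₃, t₁ ∈ I → t₂ ∈ I → t₃ ∈ I → t₁ < t₂ → t₂ < t₃ →
    ∀ v : Hh, S t₂ t₃ (ι (S t₁ t₂ v)) = S t₁ t₃ v

/-- `z` is the process seen in `Ĥ` and `xv` its `Ȟ`-valued version at times after `τ`. -/
structure IsMildSolution (I : Set ℝ) (τ : ℝ) (ι : Hv →L[ℝ] Hh) (S : ℝ → ℝ → Hh →L[ℝ] Hv)
    (z y : ℝ → Hh) (xv : ℝ → Hv) : Prop where
  embed : ∀ t ∈ I, τ < t → ι (xv t) = z t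
  integrableOn : ∀ t ∈ I, IntegrableOn (fun s => S s t (y s)) (Ioo τ t)
  eq : ∀ t ∈ I, τ < t → xv t = S τ t (z τ) + ∫ s in Ioo τ t, S s t (y s)

variable {I : Set ℝ} {τ : ℝ} {ι : Hv →L[ℝ] Hh} {S : ℝ → ℝ → Hh →L[ℝ] Hv} {z y : ℝ → Hh}
  {xv : ℝ → Hv}

lemma IsEvolutionFamily.apply_mild (hS : IsEvolutionFamily I ι S) (hI : OrdConnected I)
    {a s b : ℝ} (ha : a ∈ I) (hs : s ∈ I) (hb : b ∈ I) (has : a < s) (hsb : s < b) (w : Hh)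
    (hy : IntegrableOn (fun r => S r s (y r)) (Ioo a s)) :
    S s b (ι (S a s w + ∫ r in Ioo a s, S r s (y r))) = S a b w + ∫ r in Ioo a s, S r b (y r) := by
  have hpull := ((S s b).comp ι).integral_comp_comm hy
  rw [map_add, map_add, hS a s b ha hs hb has hsb]
  congr 1
  refine hpull.symm.trans (setIntegral_congr_fun measurableSet_Ioo fun r hr => ?_)
  exact hS r s b (hI.out ha hs (Ioo_subset_Icc_self hr)) hs hb hr.2 hsb _

lemma IsMildSolution.restart (hx : IsMildSolution I τ ι S z y xv) (hS : IsEvolutionFamily I ι S)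
    (hI : OrdConnected I) (hτ : τ ∈ I) {a b : ℝ} (ha : a ∈ I) (hb : b ∈ I) (hτa : τ ≤ a)
    (hab : a < b) :
    xv b = S a b (z a) + ∫ s in Ioo a b, S s b (y s) := by
  rcases hτa.eq_or_lt with rfl | hτa
  · exact hx.eq b hb hab
  rw [hx.eq b hb (hτa.trans hab), setIntegral_Ioo_eq_add hτa hab.le (hx.integrableOn b hb),
    ← hx.embed a ha hτa, hx.eq a ha hτa,
    hS.apply_mild hI hτ ha hb hτa hab _ (hx.integrableOn a ha), add_assoc]

lemma IsMildSolution.propagate (hx : IsMildSolution I τ ι S z y xv)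
    (hS : IsEvolutionFamily I ι S) (hI : OrdConnected I) (hτ : τ ∈ I) {a s b : ℝ} (ha : a ∈ I)
    (hb : b ∈ I) (hτa : τ ≤ a) (hs : s ∈ Ioo a b) :
    S s b (z s) = S a b (z a) + ∫ r in Ioo a s, S r b (y r) := by
  have hsI : s ∈ I := hI.out ha hb (Ioo_subset_Icc_self hs)
  rw [← hx.embed s hsI (hτa.trans_lt hs.1), hx.restart hS hI hτ ha hsI hτa hs.1]
  exact hS.apply_mild hI ha hsI hb hs.1 hs.2 _
    ((hx.integrableOn s hsI).mono_set (Ioo_subset_Ioo_left hτa))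

end Mild

theorem mild_integration_by_parts_general
    {Hv Ht Hh Hv' Ht' Hh' V : Type*}
    [NormedAddCommGroup Hv] [InnerProductSpace ℝ Hv] [CompleteSpace Hv]
    [NormedAddCommGroup Ht] [InnerProductSpace ℝ Ht]
    [NormedAddCommGroup Hh] [InnerProductSpace ℝ Hh]
    [NormedAddCommGroup Hv'] [InnerProductSpace ℝ Hv'] [CompleteSpace Hv']
    [NormedAddCommGroup Ht'] [InnerProductSpace ℝ Ht']
    [NormedAddCommGroup Hh'] [InnerProductSpace ℝ Hh']
    [NormedAddCommGroup V] [InnerProductSpace ℝ V] [CompleteSpace V]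
    -- the common time set `I ⊆ [0,∞)` and `τ = inf I`
    (I : Set ℝ) (hIclosed : IsClosed I)
    (hIconv : Convex ℝ I)
    (τ : ℝ) (hτ : IsGLB I τ)
    -- first deterministic mild-process setting
    (e₁ : Hv →L[ℝ] Ht)
    (e₂ : Ht →L[ℝ] Hh)
    (S : ℝ → ℝ → (Hh →L[ℝ] Hv))
    (hS_comp : ∀ t₁ t₂ t₃, t₁ ∈ I → t₂ ∈ I → t₃ ∈ I → t₁ < t₂ → t₂ < t₃ →
      ∀ v : Hh, S t₂ t₃ (e₂ (e₁ (S t₁ t₂ v))) = S t₁ t₃ v)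
    (x : ℝ → Ht)
    (y : ℝ → Hh)
    (xv : ℝ → Hv) (hxv : ∀ t ∈ I, τ < t → e₁ (xv t) = x t)
    (hInt : ∀ t ∈ I, IntegrableOn (fun s => S s t (y s)) (Ioo τ t))
    (hMild : ∀ t ∈ I, τ < t →
      xv t = S τ t (e₂ (x τ)) + ∫ s in Ioo τ t, S s t (y s))
    -- second deterministic mild-process setting
    (e₁' : Hv' →L[ℝ] Ht')
    (e₂' : Ht' →L[ℝ] Hh')
    (S' : ℝ → ℝ → (Hh' →L[ℝ] Hv'))
    (hS_comp' : ∀ t₁ t₂ t₃, t₁ ∈ I → t₂ ∈ I → t₃ ∈ I → t₁ < t₂ → t₂ < t₃ →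
      ∀ v : Hh', S' t₂ t₃ (e₂' (e₁' (S' t₁ t₂ v))) = S' t₁ t₃ v)
    (x' : ℝ → Ht')
    (y' : ℝ → Hh')
    (xv' : ℝ → Hv') (hxv' : ∀ t ∈ I, τ < t → e₁' (xv' t) = x' t)
    (hInt' : ∀ t ∈ I, IntegrableOn (fun s => S' s t (y' s)) (Ioo τ t))
    (hMild' : ∀ t ∈ I, τ < t →
      xv' t = S' τ t (e₂' (x' τ)) + ∫ s in Ioo τ t, S' s t (y' s))
    -- the bounded bilinear test function
    (φ : Hv →L[ℝ] Hv' →L[ℝ] V)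
    (t₀ t : ℝ) (ht₀ : t₀ ∈ I) (ht : t ∈ I) (hlt : t₀ < t) :
    IntegrableOn (fun s => φ (S s t (y s)) (S' s t (e₂' (x' s)))) (Ioo t₀ t) ∧
    IntegrableOn (fun s => φ (S s t (e₂ (x s))) (S' s t (y' s))) (Ioo t₀ t) ∧
    φ (xv t) (xv' t) =
      φ (S t₀ t (e₂ (x t₀))) (S' t₀ t (e₂' (x' t₀)))
        + (∫ s in Ioo t₀ t, φ (S s t (y s)) (S' s t (e₂' (x' s))))
        + ∫ s in Ioo t₀ t, φ (S s t (e₂ (x s))) (S' s t (y' s)) := by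
  have hI : OrdConnected I := hIconv.ordConnected
  have hτI : τ ∈ I := hτ.mem_of_isClosed ⟨t₀, ht₀⟩ hIclosed
  have hτt₀ : τ ≤ t₀ := hτ.1 ht₀
  have hS : IsEvolutionFamily I (e₂ ∘L e₁) S := hS_comp
  have hS' : IsEvolutionFamily I (e₂' ∘L e₁') S' := hS_comp'
  have hmild : IsMildSolution I τ (e₂ ∘L e₁) S (fun s => e₂ (x s)) y xv :=
    ⟨fun s hs hτs => congrArg e₂ (hxv s hs hτs), hInt, hMild⟩
  have hmild' : IsMildSolution I τ (e₂' ∘L e₁') S' (fun s => e₂' (x' s)) y' xv' :=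
    ⟨fun s hs hτs => congrArg e₂' (hxv' s hs hτs), hInt', hMild'⟩
  have hprop := fun s (hs : s ∈ Ioo t₀ t) => hmild.propagate hS hI hτI ht₀ ht hτt₀ hs
  have hprop' := fun s (hs : s ∈ Ioo t₀ t) => hmild'.propagate hS' hI hτI ht₀ ht hτt₀ hs
  obtain ⟨hint, hint', hparts⟩ := integration_by_parts_bilinear_primitive φ
    (S t₀ t (e₂ (x t₀))) (S' t₀ t (e₂' (x' t₀)))
    ((hInt t ht).mono_set (Ioo_subset_Ioo_left hτt₀))
    ((hInt' t ht).mono_set (Ioo_subset_Ioo_left hτt₀))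
  refine ⟨hint.congr_fun (fun s hs => by rw [hprop' s hs]) measurableSet_Ioo,
    hint'.congr_fun (fun s hs => by rw [hprop s hs]) measurableSet_Ioo, ?_⟩
  rw [hmild.restart hS hI hτI ht₀ ht hτt₀ hlt, hmild'.restart hS' hI hτI ht₀ ht hτt₀ hlt, hparts]
  congr 1
  · congr 1
    exact setIntegral_congr_fun measurableSet_Ioo fun s hs => by rw [hprop' s hs]
  · exact setIntegral_congr_fun measurableSet_Ioo fun s hs => by rw [hprop s hs]

/-- **Mild integration by parts** (Example 1, deterministic case).
Given two deterministic mild-process settings over the same time set `I` and a bounded bilinear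
map `φ : Ȟ × Ȟ' → V`, for all `t₀ < t` in `I`:
`φ(x_t, 𝓍_t) = φ(S_{t₀,t} x_{t₀}, 𝒮_{t₀,t} 𝓍_{t₀}) + ∫ φ(S_{s,t} y_s, 𝒮_{s,t} 𝓍_s) ds
  + ∫ φ(S_{s,t} x_s, 𝒮_{s,t} 𝓎_s) ds`, both integrands being Bochner integrable on `(t₀,t)`. -/
theorem mild_integration_by_parts
    {Hv Ht Hh Hv' Ht' Hh' V : Type*}
    [NormedAddCommGroup Hv] [InnerProductSpace ℝ Hv] [CompleteSpace Hv]
    [SecondCountableTopology Hv] [MeasurableSpace Hv] [BorelSpace Hv]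
    [NormedAddCommGroup Ht] [InnerProductSpace ℝ Ht] [CompleteSpace Ht]
    [SecondCountableTopology Ht] [MeasurableSpace Ht] [BorelSpace Ht]
    [NormedAddCommGroup Hh] [InnerProductSpace ℝ Hh] [CompleteSpace Hh]
    [SecondCountableTopology Hh] [MeasurableSpace Hh] [BorelSpace Hh]
    [NormedAddCommGroup Hv'] [InnerProductSpace ℝ Hv'] [CompleteSpace Hv']
    [SecondCountableTopology Hv'] [MeasurableSpace Hv'] [BorelSpace Hv']
    [NormedAddCommGroup Ht'] [InnerProductSpace ℝ Ht'] [CompleteSpace Ht']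
    [SecondCountableTopology Ht'] [MeasurableSpace Ht'] [BorelSpace Ht']
    [NormedAddCommGroup Hh'] [InnerProductSpace ℝ Hh'] [CompleteSpace Hh']
    [SecondCountableTopology Hh'] [MeasurableSpace Hh'] [BorelSpace Hh']
    [NormedAddCommGroup V] [InnerProductSpace ℝ V] [CompleteSpace V]
    [SecondCountableTopology V]
    -- the common time set `I ⊆ [0,∞)` and `τ = inf I`
    (I : Set ℝ) (hI0 : I ⊆ Ici (0 : ℝ)) (hIclosed : IsClosed I)
    (hIconv : Convex ℝ I) (hIint : (interior I).Nonempty)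
    (τ : ℝ) (hτ : IsGLB I τ)
    -- first deterministic mild-process setting
    (e₁ : Hv →L[ℝ] Ht) (he₁ : Function.Injective e₁) (he₁d : DenseRange e₁)
    (e₂ : Ht →L[ℝ] Hh) (he₂ : Function.Injective e₂) (he₂d : DenseRange e₂)
    (S : ℝ → ℝ → (Hh →L[ℝ] Hv))
    (hS_comp : ∀ t₁ t₂ t₃, t₁ ∈ I → t₂ ∈ I → t₃ ∈ I → t₁ < t₂ → t₂ < t₃ →
      ∀ v : Hh, S t₂ t₃ (e₂ (e₁ (S t₁ t₂ v))) = S t₁ t₃ v)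
    (hS_meas : ∀ v : Hh, Measurable fun p : ℝ × ℝ => S p.1 p.2 v)
    (x : ℝ → Ht) (hx : Measurable x)
    (y : ℝ → Hh) (hy : Measurable y)
    (xv : ℝ → Hv) (hxv : ∀ t ∈ I, τ < t → e₁ (xv t) = x t)
    (hInt : ∀ t ∈ I, IntegrableOn (fun s => S s t (y s)) (Ioo τ t))
    (hMild : ∀ t ∈ I, τ < t →
      xv t = S τ t (e₂ (x τ)) + ∫ s in Ioo τ t, S s t (y s))
    -- second deterministic mild-process setting
    (e₁' : Hv' →L[ℝ] Ht') (he₁' : Function.Injective e₁') (he₁d' : DenseRange e₁')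
    (e₂' : Ht' →L[ℝ] Hh') (he₂' : Function.Injective e₂') (he₂d' : DenseRange e₂')
    (S' : ℝ → ℝ → (Hh' →L[ℝ] Hv'))
    (hS_comp' : ∀ t₁ t₂ t₃, t₁ ∈ I → t₂ ∈ I → t₃ ∈ I → t₁ < t₂ → t₂ < t₃ →
      ∀ v : Hh', S' t₂ t₃ (e₂' (e₁' (S' t₁ t₂ v))) = S' t₁ t₃ v)
    (hS_meas' : ∀ v : Hh', Measurable fun p : ℝ × ℝ => S' p.1 p.2 v)
    (x' : ℝ → Ht') (hx' : Measurable x')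
    (y' : ℝ → Hh') (hy' : Measurable y')
    (xv' : ℝ → Hv') (hxv' : ∀ t ∈ I, τ < t → e₁' (xv' t) = x' t)
    (hInt' : ∀ t ∈ I, IntegrableOn (fun s => S' s t (y' s)) (Ioo τ t))
    (hMild' : ∀ t ∈ I, τ < t →
      xv' t = S' τ t (e₂' (x' τ)) + ∫ s in Ioo τ t, S' s t (y' s))
    -- the bounded bilinear test function
    (φ : Hv →L[ℝ] Hv' →L[ℝ] V)
    (t₀ t : ℝ) (ht₀ : t₀ ∈ I) (ht : t ∈ I) (hlt : t₀ < t) :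
    IntegrableOn (fun s => φ (S s t (y s)) (S' s t (e₂' (x' s)))) (Ioo t₀ t) ∧
    IntegrableOn (fun s => φ (S s t (e₂ (x s))) (S' s t (y' s))) (Ioo t₀ t) ∧
    φ (xv t) (xv' t) =
      φ (S t₀ t (e₂ (x t₀))) (S' t₀ t (e₂' (x' t₀)))
        + (∫ s in Ioo t₀ t, φ (S s t (y s)) (S' s t (e₂' (x' s))))
        + ∫ s in Ioo t₀ t, φ (S s t (e₂ (x s))) (S' s t (y' s)) :=
  mild_integration_by_parts_general I hIclosed hIconv τ hτ e₁ e₂ S hS_comp x y xv hxv hInt hMild e₁'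
    e₂' S' hS_comp' x' y' xv' hxv' hInt' hMild' φ t₀ t ht₀ ht hlt
end

section
/- Restart property of mild processes (Proposition 1, deterministic case). In the deterministic mild-process setting, for all t₁, t₂ ∈ I with t₁ < t₂ one has ∫_{t₁}^{t₂} ‖S_{s,t₂} y_s‖_{Ȟ} ds < ∞ and x_{t₂} = S_{t₁,t₂} x_{t₁} + ∫_{t₁}^{t₂} S_{s,t₂} y_s ds (a Bochner integral in Ȟ). -/
/-!
Restarting the mild formula at `t₁` splits `∫_τ^{t₂}` into `∫_τ^{t₁} + ∫_{t₁}^{t₂}`; applying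
`S_{t₁,t₂}` to the mild formula at `t₁` and using `S_{t₁,t₂} S_{s,t₁} = S_{s,t₂}` under the integral
sign produces exactly the first piece together with the initial term `S_{τ,t₂} x_τ`.
-/

open MeasureTheory Set

section

variable {E F : Type*} [NormedAddCommGroup E] [NormedSpace ℝ E]
  [NormedAddCommGroup F] [NormedSpace ℝ F]

theorem setIntegral_Ioo_add_Ioo {μ : Measure ℝ} [NullSingletonClass μ] {f : ℝ → F} {a b c : ℝ}
    (hab : a ≤ b) (hbc : b ≤ c) (hf : IntegrableOn f (Ioo a c) μ) :
    ∫ s in Ioo a b, f s ∂μ + ∫ s in Ioo b c, f s ∂μ = ∫ s in Ioo a c, f s ∂μ := by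
  have hf' : IntervalIntegrable f μ a c :=
    (intervalIntegrable_iff_integrableOn_Ioo_of_le (hab.trans hbc)).2 hf
  simp only [← integral_Ioc_eq_integral_Ioo, ← intervalIntegral.integral_of_le hab,
    ← intervalIntegral.integral_of_le hbc, ← intervalIntegral.integral_of_le (hab.trans hbc)]
  exact intervalIntegral.integral_add_adjacent_intervals
    (hf'.mono_set (uIcc_subset_uIcc left_mem_uIcc (mem_uIcc_of_le hab hbc)))
    (hf'.mono_set (uIcc_subset_uIcc (mem_uIcc_of_le hab hbc) right_mem_uIcc))

theorem mild_formula_restart [CompleteSpace F] {S : ℝ → ℝ → E →L[ℝ] F} (ι : F →L[ℝ] E)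
    {x₀ : E} {y : ℝ → E} {τ t₁ t₂ : ℝ} (hτt₁ : τ < t₁) (ht₁t₂ : t₁ ≤ t₂)
    (hS : ∀ s ∈ Ico τ t₁, ∀ v, S t₁ t₂ (ι (S s t₁ v)) = S s t₂ v)
    (hy₁ : IntegrableOn (fun s => S s t₁ (y s)) (Ioo τ t₁))
    (hy₂ : IntegrableOn (fun s => S s t₂ (y s)) (Ioo τ t₂)) :
    S τ t₂ x₀ + ∫ s in Ioo τ t₂, S s t₂ (y s) =
      S t₁ t₂ (ι (S τ t₁ x₀ + ∫ s in Ioo τ t₁, S s t₁ (y s))) +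
        ∫ s in Ioo t₁ t₂, S s t₂ (y s) := by
  have hcomm : S t₁ t₂ (ι (∫ s in Ioo τ t₁, S s t₁ (y s))) = ∫ s in Ioo τ t₁, S s t₂ (y s) :=
    calc S t₁ t₂ (ι (∫ s in Ioo τ t₁, S s t₁ (y s)))
        = ∫ s in Ioo τ t₁, (S t₁ t₂).comp ι (S s t₁ (y s)) :=
          ((S t₁ t₂).comp ι |>.integral_comp_comm hy₁).symm
      _ = ∫ s in Ioo τ t₁, S s t₂ (y s) :=
          setIntegral_congr_fun measurableSet_Ioo fun s hs => hS s (Ioo_subset_Ico_self hs) (y s)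
  rw [map_add, map_add, hcomm, hS τ (left_mem_Ico.2 hτt₁) x₀, add_assoc,
    setIntegral_Ioo_add_Ioo hτt₁.le ht₁t₂ hy₂]

end

theorem mild_process_restart_general
    {Hv Ht Hh : Type*}
    [NormedAddCommGroup Hv] [InnerProductSpace ℝ Hv] [CompleteSpace Hv]
    [NormedAddCommGroup Ht] [InnerProductSpace ℝ Ht]
    [NormedAddCommGroup Hh] [InnerProductSpace ℝ Hh]
    -- the time set `I ⊆ [0,∞)`, closed and convex with nonempty interior, and `τ = inf I`
    (I : Set ℝ) (hIclosed : IsClosed I)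
    (hIconv : Convex ℝ I)
    (τ : ℝ) (hτ : IsGLB I τ)
    -- continuous dense embeddings `Ȟ ⊆ H̃ ⊆ Ĥ`
    (e₁ : Hv →L[ℝ] Ht)
    (e₂ : Ht →L[ℝ] Hh)
    -- the semigroup `S`
    (S : ℝ → ℝ → (Hh →L[ℝ] Hv))
    (hS_comp : ∀ t₁ t₂ t₃, t₁ ∈ I → t₂ ∈ I → t₃ ∈ I → t₁ < t₂ → t₂ < t₃ →
      ∀ v : Hh, S t₂ t₃ (e₂ (e₁ (S t₁ t₂ v))) = S t₁ t₃ v)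
    -- the mild process `x` with mild drift `y`; `xv t` realizes `x t ∈ Ȟ` for `t > τ`
    (x : ℝ → Ht)
    (y : ℝ → Hh)
    (xv : ℝ → Hv) (hxv : ∀ t ∈ I, τ < t → e₁ (xv t) = x t)
    (hInt : ∀ t ∈ I, IntegrableOn (fun s => S s t (y s)) (Ioo τ t))
    (hMild : ∀ t ∈ I, τ < t →
      xv t = S τ t (e₂ (x τ)) + ∫ s in Ioo τ t, S s t (y s))
    (t₁ t₂ : ℝ) (ht₁ : t₁ ∈ I) (ht₂ : t₂ ∈ I) (hlt : t₁ < t₂) :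
    IntegrableOn (fun s => S s t₂ (y s)) (Ioo t₁ t₂) ∧
    xv t₂ = S t₁ t₂ (e₂ (x t₁)) + ∫ s in Ioo t₁ t₂, S s t₂ (y s) := by
  have hτt₁ : τ ≤ t₁ := hτ.1 ht₁
  have hτI : τ ∈ I := hτ.mem_of_isClosed ⟨t₁, ht₁⟩ hIclosed
  have hy₂ := hInt t₂ ht₂
  refine ⟨hy₂.mono_set (Ioo_subset_Ioo_left hτt₁), ?_⟩
  rcases hτt₁.eq_or_lt with rfl | hτt₁
  · exact hMild t₂ ht₂ hlt
  have hS : ∀ s ∈ Ico τ t₁, ∀ v, S t₁ t₂ (e₂.comp e₁ (S s t₁ v)) = S s t₂ v := fun s hs =>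
    hS_comp s t₁ t₂ (hIconv.ordConnected.out hτI ht₁ (Ico_subset_Icc_self hs)) ht₁ ht₂ hs.2 hlt
  rw [hMild t₂ ht₂ (hτt₁.trans hlt), ← hxv t₁ ht₁ hτt₁, hMild t₁ ht₁ hτt₁]
  exact mild_formula_restart (e₂.comp e₁) hτt₁ hlt.le hS (hInt t₁ ht₁) hy₂

/-- **Restart property of mild processes** (Proposition 1, deterministic case).
In the deterministic mild-process setting, for all `t₁ < t₂` in `I` the map
`s ↦ S_{s,t₂} y_s` is Bochner integrable on `(t₁,t₂)` and
`x_{t₂} = S_{t₁,t₂} x_{t₁} + ∫_{t₁}^{t₂} S_{s,t₂} y_s ds`. -/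
theorem mild_process_restart
    {Hv Ht Hh : Type*}
    [NormedAddCommGroup Hv] [InnerProductSpace ℝ Hv] [CompleteSpace Hv]
    [SecondCountableTopology Hv] [MeasurableSpace Hv] [BorelSpace Hv]
    [NormedAddCommGroup Ht] [InnerProductSpace ℝ Ht] [CompleteSpace Ht]
    [SecondCountableTopology Ht] [MeasurableSpace Ht] [BorelSpace Ht]
    [NormedAddCommGroup Hh] [InnerProductSpace ℝ Hh] [CompleteSpace Hh]
    [SecondCountableTopology Hh] [MeasurableSpace Hh] [BorelSpace Hh]
    -- the time set `I ⊆ [0,∞)`, closed and convex with nonempty interior, and `τ = inf I`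
    (I : Set ℝ) (hI0 : I ⊆ Ici (0 : ℝ)) (hIclosed : IsClosed I)
    (hIconv : Convex ℝ I) (hIint : (interior I).Nonempty)
    (τ : ℝ) (hτ : IsGLB I τ)
    -- continuous dense embeddings `Ȟ ⊆ H̃ ⊆ Ĥ`
    (e₁ : Hv →L[ℝ] Ht) (he₁ : Function.Injective e₁) (he₁d : DenseRange e₁)
    (e₂ : Ht →L[ℝ] Hh) (he₂ : Function.Injective e₂) (he₂d : DenseRange e₂)
    -- the semigroup `S`
    (S : ℝ → ℝ → (Hh →L[ℝ] Hv))
    (hS_comp : ∀ t₁ t₂ t₃, t₁ ∈ I → t₂ ∈ I → t₃ ∈ I → t₁ < t₂ → t₂ < t₃ →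
      ∀ v : Hh, S t₂ t₃ (e₂ (e₁ (S t₁ t₂ v))) = S t₁ t₃ v)
    (hS_meas : ∀ v : Hh, Measurable fun p : ℝ × ℝ => S p.1 p.2 v)
    -- the mild process `x` with mild drift `y`; `xv t` realizes `x t ∈ Ȟ` for `t > τ`
    (x : ℝ → Ht) (hx : Measurable x)
    (y : ℝ → Hh) (hy : Measurable y)
    (xv : ℝ → Hv) (hxv : ∀ t ∈ I, τ < t → e₁ (xv t) = x t)
    (hInt : ∀ t ∈ I, IntegrableOn (fun s => S s t (y s)) (Ioo τ t))
    (hMild : ∀ t ∈ I, τ < t →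
      xv t = S τ t (e₂ (x τ)) + ∫ s in Ioo τ t, S s t (y s))
    (t₁ t₂ : ℝ) (ht₁ : t₁ ∈ I) (ht₂ : t₂ ∈ I) (hlt : t₁ < t₂) :
    IntegrableOn (fun s => S s t₂ (y s)) (Ioo t₁ t₂) ∧
    xv t₂ = S t₁ t₂ (e₂ (x t₁)) + ∫ s in Ioo t₁ t₂, S s t₂ (y s) :=
  mild_process_restart_general I hIclosed hIconv τ hτ e₁ e₂ S hS_comp x y xv hxv hInt hMild t₁ t₂
    ht₁ ht₂ hlt
end

section
/- Lemma (an embedding for probability measures): smooth test functions with bounded support determine a probability measure on a separable Hilbert space. Let H and V be separable real Hilbert spaces with V ≠ {0}, and let μ₁, μ₂ be Borel probability measures on H such that ∫_H φ(x) μ₁(dx) = ∫_H φ(x) μ₂(dx) (Bochner integrals in V) for every function φ : H → V which is infinitely often Fréchet differentiable, bounded, and vanishes outside some bounded subset of H. Then μ₁ = μ₂. -/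
/-!
Finite intersections of open balls form a π-system generating the Borel σ-algebra of a separable
normed space, so it suffices that `μ₁` and `μ₂` agree on such sets. The indicator of each of them
is the pointwise limit of products of smooth bump functions (which exist because the squared
Hilbert norm is smooth) taking values in `[0, 1]` and having bounded support, so dominated
convergence turns equality of the integrals of smooth test functions into equality of measures.
Vector-valued test functions reduce to real-valued ones by multiplying with a fixed nonzero `v`.
-/

open MeasureTheory Filter Topology Set Metric Bornology Function
open scoped ContDiff

theorem isTopologicalBasis_setOf_ball_pos {X : Type*} [PseudoMetricSpace X] :
    TopologicalSpace.IsTopologicalBasis {U : Set X | ∃ c r, 0 < r ∧ U = ball c r} := by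
  refine TopologicalSpace.isTopologicalBasis_of_isOpen_of_nhds ?_ fun x U hx hU => ?_
  · rintro _ ⟨c, r, -, rfl⟩
    exact isOpen_ball
  · obtain ⟨r, hr, hball⟩ := Metric.isOpen_iff.1 hU x hx
    exact ⟨ball x r, ⟨x, r, hr, rfl⟩, mem_ball_self hr, hball⟩

section SmoothIndicatorApprox

variable {E : Type*} [NormedAddCommGroup E] [NormedSpace ℝ E]

def HasSmoothIndicatorApprox (s : Set E) : Prop :=
  ∃ φ : ℕ → E → ℝ, (∀ n, ContDiff ℝ ∞ (φ n)) ∧ (∀ n x, φ n x ∈ Icc (0 : ℝ) 1) ∧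
    (∀ n, IsBounded (support (φ n))) ∧
    ∀ x, Tendsto (fun n => φ n x) atTop (𝓝 (s.indicator 1 x))

theorem hasSmoothIndicatorApprox_ball [HasContDiffBump E] (c : E) {r : ℝ} (hr : 0 < r) :
    HasSmoothIndicatorApprox (ball c r) := by
  have hδ (n : ℕ) : 0 < r / (n + 2) := by positivity
  have hδr (n : ℕ) : r / (n + 2) < r := div_lt_self hr (by linarith [n.cast_nonneg (α := ℝ)])
  let f (n : ℕ) : ContDiffBump c :=
    ⟨r - r / (n + 2), r, sub_pos.2 (hδr n), sub_lt_self r (hδ n)⟩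
  have hrIn : Tendsto (fun n : ℕ => r - r / (n + 2)) atTop (𝓝 r) := by
    have h := (tendsto_const_div_atTop_nhds_zero_nat r).comp (tendsto_add_atTop_nat 2)
    simpa [Function.comp_def, add_assoc, one_add_one_eq_two] using tendsto_const_nhds.sub h
  refine ⟨fun n => f n, fun n => (f n).contDiff, fun n x => ⟨(f n).nonneg, (f n).le_one⟩,
    fun n => (f n).support_eq ▸ isBounded_ball, fun x => ?_⟩
  by_cases hx : x ∈ ball c r
  · rw [indicator_of_mem hx]
    refine tendsto_const_nhds.congr' ?_
    filter_upwards [(tendsto_order.1 hrIn).1 _ (mem_ball.1 hx)] with n hn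
    exact ((f n).one_of_mem_closedBall (mem_closedBall.2 hn.le)).symm
  · rw [indicator_of_notMem hx]
    exact tendsto_const_nhds.congr fun n => ((f n).zero_of_le_dist (not_lt.1 hx)).symm

theorem HasSmoothIndicatorApprox.inter {s t : Set E} (hs : HasSmoothIndicatorApprox s)
    (ht : HasSmoothIndicatorApprox t) : HasSmoothIndicatorApprox (s ∩ t) := by
  obtain ⟨φ, hφ, hφ01, hφb, hφlim⟩ := hs
  obtain ⟨ψ, hψ, hψ01, -, hψlim⟩ := ht
  refine ⟨fun n => φ n * ψ n, fun n => (hφ n).mul (hψ n), fun n x => ?_,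
    fun n => (hφb n).subset (support_mul_subset_left _ _), fun x => ?_⟩
  · exact ⟨mul_nonneg (hφ01 n x).1 (hψ01 n x).1,
      mul_le_one₀ (hφ01 n x).2 (hψ01 n x).1 (hψ01 n x).2⟩
  · rw [inter_indicator_one]
    exact (hφlim x).mul (hψlim x)

theorem isPiSystem_setOf_hasSmoothIndicatorApprox :
    IsPiSystem {s : Set E | HasSmoothIndicatorApprox s} :=
  fun _ hs _ ht _ => hs.inter ht

variable [MeasurableSpace E]

theorem HasSmoothIndicatorApprox.measurableSet [OpensMeasurableSpace E] {s : Set E}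
    (hs : HasSmoothIndicatorApprox s) : MeasurableSet s := by
  obtain ⟨φ, hφ, -, -, hφlim⟩ := hs
  exact (measurable_indicator_const_iff (1 : ℝ)).1 <|
    measurable_of_tendsto_metrizable (fun n => (hφ n).continuous.measurable)
      (tendsto_pi_nhds.2 hφlim)

theorem HasSmoothIndicatorApprox.measure_eq [OpensMeasurableSpace E] {μ ν : Measure E}
    [IsFiniteMeasure μ] [IsFiniteMeasure ν]
    (h : ∀ f : E → ℝ, ContDiff ℝ ∞ f → (∀ x, f x ∈ Icc (0 : ℝ) 1) → IsBounded (support f) →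
      ∫ x, f x ∂μ = ∫ x, f x ∂ν)
    {s : Set E} (hs : HasSmoothIndicatorApprox s) : μ s = ν s := by
  have hsm := hs.measurableSet
  obtain ⟨φ, hφ, hφ01, hφb, hφlim⟩ := hs
  have hlim (ρ : Measure E) [IsFiniteMeasure ρ] :
      Tendsto (fun n => ∫ x, φ n x ∂ρ) atTop (𝓝 (ρ.real s)) := by
    rw [← integral_indicator_one hsm]
    refine tendsto_integral_of_dominated_convergence (fun _ => 1)
      (fun n => (hφ n).continuous.aestronglyMeasurable) (integrable_const 1)
      (fun n => ae_of_all _ fun x => ?_) (ae_of_all _ hφlim)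
    rw [Real.norm_of_nonneg (hφ01 n x).1]
    exact (hφ01 n x).2
  have heq : (fun n => ∫ x, φ n x ∂μ) = fun n => ∫ x, φ n x ∂ν :=
    funext fun n => h _ (hφ n) (hφ01 n) (hφb n)
  rw [← measureReal_eq_measureReal_iff]
  exact tendsto_nhds_unique (heq ▸ hlim μ) (hlim ν)

theorem measurableSpace_eq_generateFrom_hasSmoothIndicatorApprox [BorelSpace E]
    [SecondCountableTopology E] [HasContDiffBump E] :
    ‹MeasurableSpace E› = MeasurableSpace.generateFrom {s | HasSmoothIndicatorApprox s} := by
  refine le_antisymm ?_ (MeasurableSpace.generateFrom_le fun s hs => hs.measurableSet)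
  rw [BorelSpace.measurable_eq (α := E), isTopologicalBasis_setOf_ball_pos.borel_eq_generateFrom]
  refine MeasurableSpace.generateFrom_mono ?_
  rintro _ ⟨c, r, hr, rfl⟩
  exact hasSmoothIndicatorApprox_ball c hr

theorem ext_of_forall_integral_eq_of_contDiff [BorelSpace E] [SecondCountableTopology E]
    [HasContDiffBump E] {μ ν : Measure E} [IsProbabilityMeasure μ] [IsProbabilityMeasure ν]
    (h : ∀ f : E → ℝ, ContDiff ℝ ∞ f → (∀ x, f x ∈ Icc (0 : ℝ) 1) → IsBounded (support f) →
      ∫ x, f x ∂μ = ∫ x, f x ∂ν) :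
    μ = ν :=
  ext_of_generate_finite _ measurableSpace_eq_generateFrom_hasSmoothIndicatorApprox
    isPiSystem_setOf_hasSmoothIndicatorApprox (fun _ hs => hs.measure_eq h) (by simp)

end SmoothIndicatorApprox

theorem measure_ext_of_smooth_boundedSupport_general
    {H V : Type*}
    [NormedAddCommGroup H] [InnerProductSpace ℝ H]
    [SecondCountableTopology H] [MeasurableSpace H] [BorelSpace H]
    [NormedAddCommGroup V] [InnerProductSpace ℝ V] [CompleteSpace V]
    (hV : ∃ v : V, v ≠ 0)
    (μ₁ μ₂ : Measure H) [IsProbabilityMeasure μ₁] [IsProbabilityMeasure μ₂]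
    (h : ∀ φ : H → V, ContDiff ℝ (⊤ : ℕ∞) φ →
      (∃ C : ℝ, ∀ x : H, ‖φ x‖ ≤ C) →
      (∃ R : ℝ, 0 < R ∧ ∀ x : H, R < ‖x‖ → φ x = 0) →
      ∫ x, φ x ∂μ₁ = ∫ x, φ x ∂μ₂) :
    μ₁ = μ₂ := by
  obtain ⟨v, hv⟩ := hV
  refine ext_of_forall_integral_eq_of_contDiff fun f hf hf01 hfb => ?_
  obtain ⟨R, hR, hRf⟩ := hfb.exists_pos_norm_le
  have hbound (x : H) : ‖f x • v‖ ≤ ‖v‖ := by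
    rw [norm_smul, Real.norm_of_nonneg (hf01 x).1]
    exact mul_le_of_le_one_left (norm_nonneg v) (hf01 x).2
  have hvanish (x : H) (hx : R < ‖x‖) : f x • v = 0 := by
    rw [notMem_support.1 fun hx' => (hRf x hx').not_gt hx, zero_smul]
  have key := h (fun x => f x • v) (hf.smul contDiff_const) ⟨‖v‖, hbound⟩ ⟨R, hR, hvanish⟩
  rw [integral_smul_const, integral_smul_const] at key
  exact smul_left_injective ℝ hv key

/-- **Lemma (an embedding for probability measures)**: smooth bounded test functions vanishing
outside a bounded set determine a Borel probability measure on a separable Hilbert space.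
If `V ≠ {0}` and `∫ φ dμ₁ = ∫ φ dμ₂` for every infinitely Fréchet differentiable, bounded
`φ : H → V` vanishing outside a bounded set, then `μ₁ = μ₂`. -/
theorem measure_ext_of_smooth_boundedSupport
    {H V : Type*}
    [NormedAddCommGroup H] [InnerProductSpace ℝ H] [CompleteSpace H]
    [SecondCountableTopology H] [MeasurableSpace H] [BorelSpace H]
    [NormedAddCommGroup V] [InnerProductSpace ℝ V] [CompleteSpace V]
    [SecondCountableTopology V]
    (hV : ∃ v : V, v ≠ 0)
    (μ₁ μ₂ : Measure H) [IsProbabilityMeasure μ₁] [IsProbabilityMeasure μ₂]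
    (h : ∀ φ : H → V, ContDiff ℝ (⊤ : ℕ∞) φ →
      (∃ C : ℝ, ∀ x : H, ‖φ x‖ ≤ C) →
      (∃ R : ℝ, 0 < R ∧ ∀ x : H, R < ‖x‖ → φ x = 0) →
      ∫ x, φ x ∂μ₁ = ∫ x, φ x ∂μ₂) :
    μ₁ = μ₂ :=
  measure_ext_of_smooth_boundedSupport_general hV μ₁ μ₂ h
end

section
/- Monotonicity of the G-norms in the smoothness/growth parameters: for all real Banach spaces V₁, V₂, all integers n ≥ 0, all k ∈ {0,1,…,n}, all q ∈ [0,∞) and every φ ∈ Cⁿ(V₁,V₂), one has ‖φ‖_{G^0_{q+n}(V₁,V₂)} ≤ ‖φ‖_{G^{n−k}_{q+k}(V₁,V₂)} ≤ ‖φ‖_{G^n_q(V₁,V₂)} (inequalities in [0,∞]). -/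
open scoped ENNReal NNReal

/-- The weighted norm `‖φ‖_{G^n_q} = Σ_{i=0}^{n−1} ‖φ^{(i)}(0)‖ +
sup_v ‖φ^{(n)}(v)‖/(1+‖v‖)^q ∈ [0,∞]`. -/
noncomputable def Gnorm {V₁ V₂ : Type*} [NormedAddCommGroup V₁] [NormedSpace ℝ V₁]
    [NormedAddCommGroup V₂] [NormedSpace ℝ V₂] (n : ℕ) (q : ℝ) (φ : V₁ → V₂) : ℝ≥0∞ :=
  (∑ i ∈ Finset.range n, (‖iteratedFDeriv ℝ i φ 0‖₊ : ℝ≥0∞))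
    + ⨆ v : V₁, (‖iteratedFDeriv ℝ n φ v‖₊ : ℝ≥0∞) / ENNReal.ofReal ((1 + ‖v‖) ^ q)

/-! Each inequality is a chain of single steps `‖φ‖_{G^m_{q+1}} ≤ ‖φ‖_{G^{m+1}_q}`. In such a step
the first `m` terms agree, and by the mean value theorem a map `g` whose derivative grows like
`C (1 + ‖x‖)^q` satisfies `‖g v‖ ≤ ‖g 0‖ + C (1 + ‖v‖)^q ‖v‖ ≤ (‖g 0‖ + C) (1 + ‖v‖)^(q+1)`;
applied to `g = φ^{(m)}` this bounds the last term of the left side by the last two of the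
right side. -/

section WeightedSupNorm

variable {E F : Type*} [NormedAddCommGroup E] [NormedAddCommGroup F]

noncomputable def weightedSupNorm (q : ℝ) (f : E → F) : ℝ≥0∞ :=
  ⨆ v : E, (‖f v‖₊ : ℝ≥0∞) / ENNReal.ofReal ((1 + ‖v‖) ^ q)

theorem nnnorm_le_weightedSupNorm_mul (q : ℝ) (f : E → F) (v : E) :
    (‖f v‖₊ : ℝ≥0∞) ≤ weightedSupNorm q f * ENNReal.ofReal ((1 + ‖v‖) ^ q) := by
  have hw : 0 < (1 + ‖v‖) ^ q := Real.rpow_pos_of_pos (by positivity) q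
  exact (ENNReal.div_le_iff_le_mul (Or.inl (by simpa using hw)) (Or.inl ENNReal.ofReal_ne_top)).mp
    (le_iSup (fun v : E => (‖f v‖₊ : ℝ≥0∞) / ENNReal.ofReal ((1 + ‖v‖) ^ q)) v)

theorem norm_le_toReal_weightedSupNorm_mul {q : ℝ} {f : E → F} (hf : weightedSupNorm q f ≠ ⊤)
    (v : E) : ‖f v‖ ≤ (weightedSupNorm q f).toReal * (1 + ‖v‖) ^ q := by
  have hw : 0 ≤ (1 + ‖v‖) ^ q := by positivity
  simpa [ENNReal.toReal_ofReal hw] using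
    ENNReal.toReal_mono (ENNReal.mul_ne_top hf ENNReal.ofReal_ne_top)
      (nnnorm_le_weightedSupNorm_mul q f v)

variable [NormedSpace ℝ E] [NormedSpace ℝ F]

theorem norm_le_of_norm_fderiv_le_mul_rpow {g : E → F} (hg : Differentiable ℝ g) {C q : ℝ}
    (hq : 0 ≤ q) (hbound : ∀ x, ‖fderiv ℝ g x‖ ≤ C * (1 + ‖x‖) ^ q) (v : E) :
    ‖g v‖ ≤ (‖g 0‖ + C) * (1 + ‖v‖) ^ (q + 1) := by
  have hC : 0 ≤ C := by simpa using (norm_nonneg _).trans (hbound 0)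
  have hmvt : ‖g v - g 0‖ ≤ C * (1 + ‖v‖) ^ q * ‖v - 0‖ := by
    refine (convex_closedBall (0 : E) ‖v‖).norm_image_sub_le_of_norm_fderiv_le
      (fun x _ => hg x) (fun x hx => (hbound x).trans ?_) (by simp) (by simp)
    have hx : ‖x‖ ≤ ‖v‖ := by simpa using hx
    gcongr
  have hw : 1 ≤ (1 + ‖v‖) ^ q := Real.one_le_rpow (by simp) hq
  calc ‖g v‖ ≤ ‖g 0‖ + ‖g v - g 0‖ := norm_le_insert' _ _
    _ ≤ ‖g 0‖ + C * (1 + ‖v‖) ^ q * ‖v‖ := by simpa using hmvt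
    _ ≤ ‖g 0‖ * ((1 + ‖v‖) ^ q * (1 + ‖v‖)) + C * ((1 + ‖v‖) ^ q * (1 + ‖v‖)) := by
        gcongr ?_ + ?_
        · exact le_mul_of_one_le_right (norm_nonneg _)
            (one_le_mul_of_one_le_of_one_le hw (le_add_of_nonneg_right (norm_nonneg v)))
        · rw [← mul_assoc]
          gcongr
          linarith
    _ = (‖g 0‖ + C) * (1 + ‖v‖) ^ (q + 1) := by
        rw [Real.rpow_add_one (by positivity)]; ring

theorem weightedSupNorm_add_one_le {g : E → F} (hg : Differentiable ℝ g) {q : ℝ} (hq : 0 ≤ q) :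
    weightedSupNorm (q + 1) g ≤ ‖g 0‖₊ + weightedSupNorm q (fderiv ℝ g) := by
  set S := weightedSupNorm q (fderiv ℝ g)
  rcases eq_or_ne S ⊤ with hS | hS
  · simp [hS]
  refine iSup_le fun v => ENNReal.div_le_of_le_mul ?_
  have hgv := norm_le_of_norm_fderiv_le_mul_rpow hg hq (norm_le_toReal_weightedSupNorm_mul hS) v
  calc (‖g v‖₊ : ℝ≥0∞) = ENNReal.ofReal ‖g v‖ := (ofReal_norm _).symm
    _ ≤ ENNReal.ofReal ((‖g 0‖ + S.toReal) * (1 + ‖v‖) ^ (q + 1)) := ENNReal.ofReal_le_ofReal hgv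
    _ = (‖g 0‖₊ + S) * ENNReal.ofReal ((1 + ‖v‖) ^ (q + 1)) := by
        rw [ENNReal.ofReal_mul (by positivity), ENNReal.ofReal_add (norm_nonneg _)
          ENNReal.toReal_nonneg, ofReal_norm, enorm_eq_nnnorm, ENNReal.ofReal_toReal hS]

end WeightedSupNorm

section Gnorm

variable {V₁ V₂ : Type*} [NormedAddCommGroup V₁] [NormedSpace ℝ V₁]
  [NormedAddCommGroup V₂] [NormedSpace ℝ V₂]

theorem Gnorm_eq_sum_add_weightedSupNorm (n : ℕ) (q : ℝ) (φ : V₁ → V₂) :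
    Gnorm n q φ = (∑ i ∈ Finset.range n, (‖iteratedFDeriv ℝ i φ 0‖₊ : ℝ≥0∞))
      + weightedSupNorm q (iteratedFDeriv ℝ n φ) :=
  rfl

theorem Gnorm_le_Gnorm_succ {m : ℕ} {q : ℝ} (hq : 0 ≤ q) {φ : V₁ → V₂}
    (hφ : ContDiff ℝ (m + 1) φ) :
    Gnorm m (q + 1) φ ≤ Gnorm (m + 1) q φ := by
  rw [Gnorm_eq_sum_add_weightedSupNorm, Gnorm_eq_sum_add_weightedSupNorm,
    Finset.sum_range_succ, add_assoc]
  gcongr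
  have hderiv : weightedSupNorm q (fderiv ℝ (iteratedFDeriv ℝ m φ)) =
      weightedSupNorm q (iteratedFDeriv ℝ (m + 1) φ) := by
    simp only [weightedSupNorm, iteratedFDeriv_succ_eq_comp_left, Function.comp_apply,
      LinearIsometryEquiv.nnnorm_map]
  rw [← hderiv]
  exact weightedSupNorm_add_one_le (hφ.differentiable_iteratedFDeriv (by norm_cast; omega)) hq

theorem Gnorm_le_Gnorm_add {j d : ℕ} {q : ℝ} (hq : 0 ≤ q) {φ : V₁ → V₂}
    (hφ : ContDiff ℝ (j + d) φ) :
    Gnorm j (q + d) φ ≤ Gnorm (j + d) q φ := by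
  induction d generalizing q with
  | zero => simp
  | succ d ih =>
    calc Gnorm j (q + ↑(d + 1)) φ = Gnorm j (q + 1 + d) φ := by push_cast; ring_nf
      _ ≤ Gnorm (j + d) (q + 1) φ := ih (by linarith) (hφ.of_le (by norm_cast; omega))
      _ ≤ Gnorm (j + (d + 1)) q φ := Gnorm_le_Gnorm_succ hq hφ

end Gnorm

theorem Gnorm_mono_general {V₁ V₂ : Type*}
    [NormedAddCommGroup V₁] [NormedSpace ℝ V₁]
    [NormedAddCommGroup V₂] [NormedSpace ℝ V₂]
    (n k : ℕ) (hk : k ≤ n) (q : ℝ) (hq : 0 ≤ q)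
    (φ : V₁ → V₂) (hφ : ContDiff ℝ n φ) :
    Gnorm 0 (q + n) φ ≤ Gnorm (n - k) (q + k) φ ∧
      Gnorm (n - k) (q + k) φ ≤ Gnorm n q φ := by
  have hnk : n - k + k = n := Nat.sub_add_cancel hk
  constructor
  · have h := Gnorm_le_Gnorm_add (j := 0) (d := n - k) (by positivity : 0 ≤ q + k)
      (hφ.of_le (by norm_cast; omega))
    rwa [Nat.cast_sub hk, add_add_sub_cancel, zero_add] at h
  · have h := Gnorm_le_Gnorm_add (j := n - k) (d := k) hq (by rwa [← Nat.cast_add, hnk])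
    rwa [hnk] at h

/-- **Monotonicity of the `G`-norms in the smoothness/growth parameters**:
for `k ≤ n`, `q ≥ 0` and `φ ∈ Cⁿ(V₁,V₂)`,
`‖φ‖_{G^0_{q+n}} ≤ ‖φ‖_{G^{n−k}_{q+k}} ≤ ‖φ‖_{G^n_q}` in `[0,∞]`. -/
theorem Gnorm_mono {V₁ V₂ : Type*}
    [NormedAddCommGroup V₁] [NormedSpace ℝ V₁] [CompleteSpace V₁]
    [NormedAddCommGroup V₂] [NormedSpace ℝ V₂] [CompleteSpace V₂]
    (n k : ℕ) (hk : k ≤ n) (q : ℝ) (hq : 0 ≤ q)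
    (φ : V₁ → V₂) (hφ : ContDiff ℝ n φ) :
    Gnorm 0 (q + n) φ ≤ Gnorm (n - k) (q + k) φ ∧
      Gnorm (n - k) (q + k) φ ≤ Gnorm n q φ :=
  Gnorm_mono_general n k hk q hq φ hφ
end

section
/- Growth estimate for intermediate derivatives: for all real Banach spaces V₁, V₂, all integers n ≥ 0, all k ∈ {0,1,…,n}, all q ∈ [0,∞), every φ ∈ Cⁿ(V₁,V₂) and every v ∈ V₁, one has ‖φ^{(k)}(v)‖_{L^{(k)}(V₁,V₂)} ≤ ‖φ‖_{G^n_q(V₁,V₂)} · (1 + ‖v‖_{V₁})^{(q+n−k)} (an inequality in [0,∞]). -/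
open scoped ENNReal NNReal

/-! Integrating the top derivative along the segment `[0, v]` `n - k` times, each step adds the
value at the origin (bounded by `‖φ‖_{G^n_q}`) and raises the growth exponent by one, since
`C + C (1+‖v‖)^p ‖v‖ ≤ C (1+‖v‖)^(p+1)`. -/

section

variable {E F : Type*} [NormedAddCommGroup E] [NormedSpace ℝ E]
  [NormedAddCommGroup F] [NormedSpace ℝ F]

theorem norm_le_mul_one_add_norm_rpow_succ {f : E → F} (hf : Differentiable ℝ f) {C p : ℝ}
    (hp : 0 ≤ p) (h0 : ‖f 0‖ ≤ C) (hf' : ∀ x, ‖fderiv ℝ f x‖ ≤ C * (1 + ‖x‖) ^ p) (x : E) :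
    ‖f x‖ ≤ C * (1 + ‖x‖) ^ (p + 1) := by
  have hC : 0 ≤ C := (norm_nonneg _).trans h0
  have hball : ∀ y ∈ Metric.closedBall (0 : E) ‖x‖, ‖fderiv ℝ f y‖ ≤ C * (1 + ‖x‖) ^ p := by
    intro y hy
    refine (hf' y).trans (mul_le_mul_of_nonneg_left ?_ hC)
    exact Real.rpow_le_rpow (by positivity) (by simpa using mem_closedBall_zero_iff.mp hy) hp
  have hmvt : ‖f x - f 0‖ ≤ C * (1 + ‖x‖) ^ p * ‖x - 0‖ :=
    (convex_closedBall (0 : E) ‖x‖).norm_image_sub_le_of_norm_fderiv_le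
      (fun y _ => hf y) hball (by simp) (by simp)
  have hone : 1 ≤ (1 + ‖x‖) ^ p := Real.one_le_rpow (by simp) hp
  calc ‖f x‖ ≤ ‖f 0‖ + ‖f x - f 0‖ := norm_le_norm_add_norm_sub' _ _
    _ ≤ C + C * (1 + ‖x‖) ^ p * ‖x‖ := by rw [sub_zero] at hmvt; gcongr
    _ ≤ C * (1 + ‖x‖) ^ p * (1 + ‖x‖) := by nlinarith [norm_nonneg x]
    _ = C * (1 + ‖x‖) ^ (p + 1) := by
      rw [Real.rpow_add_one (by positivity), mul_assoc]

theorem norm_iteratedFDeriv_le_mul_one_add_norm_rpow {n : ℕ} {φ : E → F}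
    (hφ : ContDiff ℝ n φ) {G q : ℝ} (hq : 0 ≤ q)
    (hlow : ∀ i < n, ‖iteratedFDeriv ℝ i φ 0‖ ≤ G)
    (htop : ∀ w, ‖iteratedFDeriv ℝ n φ w‖ ≤ G * (1 + ‖w‖) ^ q)
    {k : ℕ} (hk : k ≤ n) (v : E) :
    ‖iteratedFDeriv ℝ k φ v‖ ≤ G * (1 + ‖v‖) ^ (q + n - k) := by
  induction hk using Nat.decreasingInduction generalizing v with
  | self => simpa using htop v
  | of_succ j hjn ih =>
    refine (norm_le_mul_one_add_norm_rpow_succ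
      (hφ.differentiable_iteratedFDeriv (by exact_mod_cast hjn)) ?_ (hlow j hjn)
      (fun x => by simpa [norm_fderiv_iteratedFDeriv] using ih x) v).trans_eq ?_
    · have : (j : ℝ) + 1 ≤ n := by exact_mod_cast hjn
      linarith
    · ring_nf

end

section

variable {V₁ V₂ : Type*} [NormedAddCommGroup V₁] [NormedSpace ℝ V₁]
  [NormedAddCommGroup V₂] [NormedSpace ℝ V₂] {n : ℕ} {q : ℝ} {φ : V₁ → V₂}

theorem norm_iteratedFDeriv_zero_le_toReal_Gnorm (hG : Gnorm n q φ ≠ ⊤) {i : ℕ} (hi : i < n) :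
    ‖iteratedFDeriv ℝ i φ 0‖ ≤ (Gnorm n q φ).toReal := by
  have hle : (‖iteratedFDeriv ℝ i φ 0‖₊ : ℝ≥0∞) ≤ Gnorm n q φ :=
    (Finset.single_le_sum (f := fun j => (‖iteratedFDeriv ℝ j φ 0‖₊ : ℝ≥0∞))
      (fun _ _ => zero_le) (Finset.mem_range.mpr hi)).trans le_self_add
  simpa using ENNReal.toReal_mono hG hle

theorem norm_iteratedFDeriv_le_toReal_Gnorm_mul (hG : Gnorm n q φ ≠ ⊤) (w : V₁) :
    ‖iteratedFDeriv ℝ n φ w‖ ≤ (Gnorm n q φ).toReal * (1 + ‖w‖) ^ q := by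
  have hweight : 0 < (1 + ‖w‖) ^ q := by positivity
  have hquot : (‖iteratedFDeriv ℝ n φ w‖₊ : ℝ≥0∞) / ENNReal.ofReal ((1 + ‖w‖) ^ q)
      ≤ Gnorm n q φ :=
    (le_iSup (fun v : V₁ => (‖iteratedFDeriv ℝ n φ v‖₊ : ℝ≥0∞) /
      ENNReal.ofReal ((1 + ‖v‖) ^ q)) w).trans le_add_self
  have hle := (ENNReal.div_le_iff (by simpa using hweight) ENNReal.ofReal_ne_top).mp hquot
  simpa [ENNReal.toReal_mul, hweight.le] using
    ENNReal.toReal_mono (ENNReal.mul_ne_top hG ENNReal.ofReal_ne_top) hle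

end

theorem norm_iteratedFDeriv_le_Gnorm_general {V₁ V₂ : Type*}
    [NormedAddCommGroup V₁] [NormedSpace ℝ V₁]
    [NormedAddCommGroup V₂] [NormedSpace ℝ V₂]
    (n k : ℕ) (hk : k ≤ n) (q : ℝ) (hq : 0 ≤ q)
    (φ : V₁ → V₂) (hφ : ContDiff ℝ n φ) (v : V₁) :
    (‖iteratedFDeriv ℝ k φ v‖₊ : ℝ≥0∞) ≤
      Gnorm n q φ * ENNReal.ofReal ((1 + ‖v‖) ^ (q + n - k : ℝ)) := by
  by_cases hG : Gnorm n q φ = ⊤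
  · have hweight : 0 < (1 + ‖v‖) ^ (q + n - k : ℝ) := by positivity
    simp [hG, ENNReal.top_mul, hweight]
  have key := norm_iteratedFDeriv_le_mul_one_add_norm_rpow hφ hq
    (fun i hi => norm_iteratedFDeriv_zero_le_toReal_Gnorm hG hi)
    (norm_iteratedFDeriv_le_toReal_Gnorm_mul hG) hk v
  rw [← ENNReal.ofReal_toReal hG, ← ENNReal.ofReal_mul ENNReal.toReal_nonneg, ← enorm_eq_nnnorm,
    ← ofReal_norm]
  exact ENNReal.ofReal_le_ofReal key

/-- **Growth estimate for intermediate derivatives**: for `k ≤ n`, `q ≥ 0`,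
`φ ∈ Cⁿ(V₁,V₂)` and `v ∈ V₁`,
`‖φ^{(k)}(v)‖ ≤ ‖φ‖_{G^n_q} · (1+‖v‖)^{q+n−k}` in `[0,∞]`. -/
theorem norm_iteratedFDeriv_le_Gnorm {V₁ V₂ : Type*}
    [NormedAddCommGroup V₁] [NormedSpace ℝ V₁] [CompleteSpace V₁]
    [NormedAddCommGroup V₂] [NormedSpace ℝ V₂] [CompleteSpace V₂]
    (n k : ℕ) (hk : k ≤ n) (q : ℝ) (hq : 0 ≤ q)
    (φ : V₁ → V₂) (hφ : ContDiff ℝ n φ) (v : V₁) :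
    (‖iteratedFDeriv ℝ k φ v‖₊ : ℝ≥0∞) ≤
      Gnorm n q φ * ENNReal.ofReal ((1 + ‖v‖) ^ (q + n - k : ℝ)) :=
  norm_iteratedFDeriv_le_Gnorm_general n k hk q hq φ hφ v
end

section
/- Weighted Lipschitz estimate for intermediate derivatives: for all real Banach spaces V₁, V₂, all integers n ≥ 0, all k ∈ {0,1,…,n}, all q ∈ [0,∞), every φ ∈ Cⁿ(V₁,V₂) and all v, w ∈ V₁, one has ‖φ^{(k)}(v) − φ^{(k)}(w)‖_{L^{(k)}(V₁,V₂)} ≤ ‖φ‖_{Lip^{n+1}_q(V₁,V₂)} · (1 + max(‖v‖_{V₁}, ‖w‖_{V₁}))^{(q+n−k)} · ‖v − w‖_{V₁} (an inequality in [0,∞]). -/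
open scoped ENNReal NNReal

/-- The weighted Lipschitz norm `‖φ‖_{Lip^{n+1}_q} = Σ_{i=0}^{n} ‖φ^{(i)}(0)‖ +
sup_{v≠w} ‖φ^{(n)}(v) − φ^{(n)}(w)‖ / ((1+max(‖v‖,‖w‖))^q ‖v−w‖) ∈ [0,∞]`. -/
noncomputable def LipNorm {V₁ V₂ : Type*} [NormedAddCommGroup V₁] [NormedSpace ℝ V₁]
    [NormedAddCommGroup V₂] [NormedSpace ℝ V₂] (n : ℕ) (q : ℝ) (φ : V₁ → V₂) : ℝ≥0∞ :=
  (∑ i ∈ Finset.range (n + 1), (‖iteratedFDeriv ℝ i φ 0‖₊ : ℝ≥0∞))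
    + ⨆ (v : V₁) (w : V₁) (_ : v ≠ w),
        (‖iteratedFDeriv ℝ n φ v - iteratedFDeriv ℝ n φ w‖₊ : ℝ≥0∞) /
          ENNReal.ofReal ((1 + max ‖v‖ ‖w‖) ^ q * ‖v - w‖)

/-!
Write `M = max ‖v‖ ‖w‖` and `C = ‖φ‖_{Lip^{n+1}_q}`. Going down from order `n`, a weighted
Lipschitz bound `C (1 + M)^p ‖v - w‖` for `φ^{(k+1)}`, compared with `‖φ^{(k+1)}(0)‖ ≤ C`, gives
the growth bound `‖φ^{(k+1)}(x)‖ ≤ C (1 + ‖x‖)^{p+1}`; since `φ^{(k+1)}` is the derivative of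
`φ^{(k)}`, the mean value theorem on the ball of radius `M` turns this into the weighted Lipschitz
bound `C (1 + M)^{p+1} ‖v - w‖` for `φ^{(k)}`.
-/

theorem norm_le_of_norm_sub_le_rpow {F : Type*} [SeminormedAddGroup F] {y y₀ : F} {C p r : ℝ}
    (hp : 0 ≤ p) (hr : 0 ≤ r) (h₀ : ‖y₀‖ ≤ C) (h : ‖y - y₀‖ ≤ C * (1 + r) ^ p * r) :
    ‖y‖ ≤ C * (1 + r) ^ (p + 1) := by
  have hC : 0 ≤ C := (norm_nonneg _).trans h₀
  have hone : 1 ≤ (1 + r) ^ p := Real.one_le_rpow (by linarith) hp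
  rw [Real.rpow_add_one (by positivity)]
  calc ‖y‖ ≤ ‖y₀‖ + ‖y - y₀‖ := norm_le_norm_add_norm_sub' y y₀
    _ ≤ C + C * (1 + r) ^ p * r := add_le_add h₀ h
    _ ≤ C * ((1 + r) ^ p * (1 + r)) := by nlinarith

section WeightedBounds

variable {E F : Type*} [NormedAddCommGroup E] [NormedSpace ℝ E]
  [NormedAddCommGroup F] [NormedSpace ℝ F]

theorem norm_sub_le_of_norm_fderiv_le_rpow {f : E → F} (hf : Differentiable ℝ f) {C p : ℝ}
    (hp : 0 ≤ p) (hf' : ∀ x, ‖fderiv ℝ f x‖ ≤ C * (1 + ‖x‖) ^ p) (v w : E) :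
    ‖f v - f w‖ ≤ C * (1 + max ‖v‖ ‖w‖) ^ p * ‖v - w‖ := by
  have hC : 0 ≤ C := by simpa using (norm_nonneg _).trans (hf' 0)
  refine (convex_closedBall (0 : E) (max ‖v‖ ‖w‖)).norm_image_sub_le_of_norm_fderiv_le
    (fun x _ ↦ hf x) (fun x hx ↦ (hf' x).trans ?_) (by simp) (by simp)
  gcongr
  exact mem_closedBall_zero_iff.1 hx

theorem norm_iteratedFDeriv_sub_le_of_bounds {φ : E → F} {n : ℕ} (hφ : ContDiff ℝ n φ)
    {C q : ℝ} (hq : 0 ≤ q) (h₀ : ∀ i ≤ n, ‖iteratedFDeriv ℝ i φ 0‖ ≤ C)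
    (hn : ∀ x y, ‖iteratedFDeriv ℝ n φ x - iteratedFDeriv ℝ n φ y‖ ≤
      C * (1 + max ‖x‖ ‖y‖) ^ q * ‖x - y‖)
    {k m : ℕ} (hkm : k + m = n) (v w : E) :
    ‖iteratedFDeriv ℝ k φ v - iteratedFDeriv ℝ k φ w‖ ≤
      C * (1 + max ‖v‖ ‖w‖) ^ (q + m) * ‖v - w‖ := by
  induction m generalizing k v w with
  | zero => subst hkm; simpa using hn v w
  | succ m ih =>
    have hk : k < n := by omega
    have hgrowth : ∀ x, ‖fderiv ℝ (iteratedFDeriv ℝ k φ) x‖ ≤ C * (1 + ‖x‖) ^ (q + m + 1) := by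
      intro x
      rw [norm_fderiv_iteratedFDeriv]
      refine norm_le_of_norm_sub_le_rpow (by positivity) (norm_nonneg x) (h₀ (k + 1) hk) ?_
      simpa using ih (k := k + 1) (by omega) x 0
    have hdiff := hφ.differentiable_iteratedFDeriv (by exact_mod_cast hk)
    simpa [add_assoc] using
      norm_sub_le_of_norm_fderiv_le_rpow hdiff (by positivity) hgrowth v w

end WeightedBounds

theorem nnnorm_le_mul_ofReal_of_norm_le_toReal_mul {F : Type*} [SeminormedAddGroup F] {a : F}
    {N : ℝ≥0∞} {b : ℝ} (hb : 0 < b) (h : N ≠ ⊤ → ‖a‖ ≤ N.toReal * b) :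
    (‖a‖₊ : ℝ≥0∞) ≤ N * ENNReal.ofReal b := by
  rcases eq_or_ne N ⊤ with rfl | hN
  · rw [ENNReal.top_mul (by simpa using hb)]
    exact le_top
  calc (‖a‖₊ : ℝ≥0∞) = ENNReal.ofReal ‖a‖ := (ofReal_norm a).symm
    _ ≤ ENNReal.ofReal (N.toReal * b) := ENNReal.ofReal_le_ofReal (h hN)
    _ = N * ENNReal.ofReal b := by
      rw [ENNReal.ofReal_mul ENNReal.toReal_nonneg, ENNReal.ofReal_toReal hN]

section LipNorm

variable {V₁ V₂ : Type*} [NormedAddCommGroup V₁] [NormedSpace ℝ V₁]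
  [NormedAddCommGroup V₂] [NormedSpace ℝ V₂]

theorem nnnorm_iteratedFDeriv_zero_le_LipNorm (q : ℝ) (φ : V₁ → V₂) {n i : ℕ} (hi : i ≤ n) :
    (‖iteratedFDeriv ℝ i φ 0‖₊ : ℝ≥0∞) ≤ LipNorm n q φ :=
  (Finset.single_le_sum (f := fun i ↦ (‖iteratedFDeriv ℝ i φ 0‖₊ : ℝ≥0∞))
    (fun _ _ ↦ zero_le) (Finset.mem_range.2 (Nat.lt_succ_of_le hi))).trans le_self_add

theorem nnnorm_iteratedFDeriv_order_sub_le_LipNorm (n : ℕ) (q : ℝ) (φ : V₁ → V₂) (v w : V₁) :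
    (‖iteratedFDeriv ℝ n φ v - iteratedFDeriv ℝ n φ w‖₊ : ℝ≥0∞) ≤
      LipNorm n q φ * ENNReal.ofReal ((1 + max ‖v‖ ‖w‖) ^ q * ‖v - w‖) := by
  rcases eq_or_ne v w with rfl | hvw
  · simp
  have hpos : 0 < (1 + max ‖v‖ ‖w‖) ^ q * ‖v - w‖ := by
    have : 0 < ‖v - w‖ := norm_pos_iff.2 (sub_ne_zero.2 hvw)
    positivity
  rw [← ENNReal.div_le_iff (by simpa using hpos) ENNReal.ofReal_ne_top]
  refine le_trans ?_ le_add_self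
  exact le_iSup₂_of_le v w (le_iSup_of_le hvw le_rfl)

end LipNorm

theorem norm_iteratedFDeriv_sub_le_LipNorm_general {V₁ V₂ : Type*}
    [NormedAddCommGroup V₁] [NormedSpace ℝ V₁]
    [NormedAddCommGroup V₂] [NormedSpace ℝ V₂]
    (n k : ℕ) (hk : k ≤ n) (q : ℝ) (hq : 0 ≤ q)
    (φ : V₁ → V₂) (hφ : ContDiff ℝ n φ) (v w : V₁) :
    (‖iteratedFDeriv ℝ k φ v - iteratedFDeriv ℝ k φ w‖₊ : ℝ≥0∞) ≤
      LipNorm n q φ *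
        ENNReal.ofReal ((1 + max ‖v‖ ‖w‖) ^ (q + n - k : ℝ) * ‖v - w‖) := by
  rcases eq_or_ne v w with rfl | hvw
  · simp
  have hvw' : 0 < ‖v - w‖ := norm_pos_iff.2 (sub_ne_zero.2 hvw)
  refine nnnorm_le_mul_ofReal_of_norm_le_toReal_mul (by positivity) fun hN ↦ ?_
  set C := (LipNorm n q φ).toReal
  have h₀ : ∀ i ≤ n, ‖iteratedFDeriv ℝ i φ 0‖ ≤ C := fun i hi ↦ by
    simpa using ENNReal.toReal_mono hN (nnnorm_iteratedFDeriv_zero_le_LipNorm q φ hi)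
  have hn : ∀ x y, ‖iteratedFDeriv ℝ n φ x - iteratedFDeriv ℝ n φ y‖ ≤
      C * (1 + max ‖x‖ ‖y‖) ^ q * ‖x - y‖ := fun x y ↦ by
    have := ENNReal.toReal_mono (ENNReal.mul_ne_top hN ENNReal.ofReal_ne_top)
      (nnnorm_iteratedFDeriv_order_sub_le_LipNorm n q φ x y)
    rwa [ENNReal.toReal_mul, ENNReal.toReal_ofReal (by positivity), ← mul_assoc] at this
  have key := norm_iteratedFDeriv_sub_le_of_bounds hφ hq h₀ hn (Nat.add_sub_cancel' hk) v w
  rwa [Nat.cast_sub hk, ← add_sub_assoc, mul_assoc] at key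

/-- **Weighted Lipschitz estimate for intermediate derivatives**: for `k ≤ n`, `q ≥ 0`,
`φ ∈ Cⁿ(V₁,V₂)` and `v, w ∈ V₁`,
`‖φ^{(k)}(v) − φ^{(k)}(w)‖ ≤ ‖φ‖_{Lip^{n+1}_q} · (1+max(‖v‖,‖w‖))^{q+n−k} · ‖v−w‖`
in `[0,∞]`. -/
theorem norm_iteratedFDeriv_sub_le_LipNorm {V₁ V₂ : Type*}
    [NormedAddCommGroup V₁] [NormedSpace ℝ V₁] [CompleteSpace V₁]
    [NormedAddCommGroup V₂] [NormedSpace ℝ V₂] [CompleteSpace V₂]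
    (n k : ℕ) (hk : k ≤ n) (q : ℝ) (hq : 0 ≤ q)
    (φ : V₁ → V₂) (hφ : ContDiff ℝ n φ) (v w : V₁) :
    (‖iteratedFDeriv ℝ k φ v - iteratedFDeriv ℝ k φ w‖₊ : ℝ≥0∞) ≤
      LipNorm n q φ *
        ENNReal.ofReal ((1 + max ‖v‖ ‖w‖) ^ (q + n - k : ℝ) * ‖v - w‖) :=
  norm_iteratedFDeriv_sub_le_LipNorm_general n k hk q hq φ hφ v w
end

section
/- Completeness of G^n_q: for all real Banach spaces V₁, V₂, every integer n ≥ 0 and every q ∈ [0,∞), the normed space (G^n_q(V₁,V₂), ‖·‖_{G^n_q(V₁,V₂)}) is complete; i.e., for every sequence (φ_m)_{m∈ℕ} in G^n_q(V₁,V₂) with lim_{m,l→∞} ‖φ_m − φ_l‖_{G^n_q(V₁,V₂)} = 0 there exists φ ∈ G^n_q(V₁,V₂) with lim_{m→∞} ‖φ_m − φ‖_{G^n_q(V₁,V₂)} = 0. -/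
/-!
A bound `‖D^n g v‖ ≤ ε (1 + ‖v‖)^q` together with `‖D^i g 0‖ ≤ ε` for `i < n` propagates, by the
mean value inequality applied downwards from `i = n`, to `‖D^i g v‖ ≤ ε (1 + ‖v‖)^(q + n - i)`
for all `i ≤ n`; conversely such bounds control `‖g‖_{G^n_q}`. Hence a `‖·‖_{G^n_q}`-Cauchy
sequence has all its derivatives up to order `n` Cauchy uniformly for these continuous weights,
so they converge locally uniformly. Locally uniform limits of Taylor series are Taylor series of
the limit, which is therefore `Cⁿ`, and the weighted bounds pass to the limit.
-/
open Filter
open scoped ENNReal NNReal Topology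

open Metric Set

theorem ENNReal.tendsto_nhds_zero_iff_ofReal {α : Type*} {l : Filter α} {u : α → ℝ≥0∞} :
    Tendsto u l (𝓝 0) ↔ ∀ ε > 0, ∀ᶠ x in l, u x ≤ ENNReal.ofReal ε := by
  rw [ENNReal.tendsto_nhds_zero]
  refine ⟨fun h ε hε => h _ (ENNReal.ofReal_pos.2 hε), fun h ε hε => ?_⟩
  obtain ⟨r, -, hr, hrε⟩ := ENNReal.lt_iff_exists_real_btwn.1 hε
  exact (h r (ENNReal.ofReal_pos.1 hr)).mono fun _ hx => hx.trans hrε.le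

section TaylorSeriesLimit

variable {𝕜 E F ι : Type*} [RCLike 𝕜] [NormedAddCommGroup E] [NormedSpace 𝕜 E]
  [NormedAddCommGroup F] [NormedSpace 𝕜 F] {l : Filter ι} [l.NeBot]

theorem HasFTaylorSeriesUpTo.of_tendstoLocallyUniformly {n : WithTop ℕ∞} {f : ι → E → F}
    {P : ι → E → FormalMultilinearSeries 𝕜 E F} {p : E → FormalMultilinearSeries 𝕜 E F}
    (hf : ∀ k, HasFTaylorSeriesUpTo n (f k) (P k))
    (hP : ∀ i : ℕ, i ≤ n → TendstoLocallyUniformly (fun k x => P k x i) (fun x => p x i) l) :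
    HasFTaylorSeriesUpTo n (fun x => (p x 0).curry0) p where
  zero_eq _ := rfl
  fderiv i hi x := by
    have hcurry := (continuousMultilinearCurryLeftEquiv 𝕜 (fun _ : Fin (i + 1) => E)
      F).isometry.uniformContinuous.comp_tendstoLocallyUniformly
        (hP (i + 1) (ENat.add_one_natCast_le_withTop_of_lt hi))
    exact hasFDerivAt_of_tendstoLocallyUniformlyOn isOpen_univ hcurry.tendstoLocallyUniformlyOn
      (fun k y _ => (hf k).fderiv i hi y)
      (fun y hy => (hP i hi.le).tendstoLocallyUniformlyOn.tendsto_at hy) (mem_univ x)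
  cont i hi := (hP i hi).continuous (Frequently.of_forall fun k => (hf k).cont i hi)

end TaylorSeriesLimit

section WeightedConvergence

variable {X E : Type*} [NormedAddCommGroup E]

theorem tendstoLocallyUniformly_of_eventually_norm_sub_le [TopologicalSpace X] {ι : Type*}
    {l : Filter ι} {u : ι → X → E} {U : X → E} {w : X → ℝ} (hw : Continuous w)
    (h : ∀ δ > 0, ∀ᶠ k in l, ∀ x, ‖u k x - U x‖ ≤ δ * w x) :
    TendstoLocallyUniformly u U l := by
  rw [tendstoLocallyUniformly_iff]
  intro ε hε x
  have hδ : 0 < ε / (|w x| + 1) := by positivity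
  refine ⟨{y | w y < w x + 1}, hw.continuousAt.preimage_mem_nhds (Iio_mem_nhds (lt_add_one _)),
    (h _ hδ).mono fun k hk y hy => ?_⟩
  rw [dist_comm, dist_eq_norm]
  calc ‖u k y - U y‖ ≤ ε / (|w x| + 1) * w y := hk y
    _ < ε / (|w x| + 1) * (|w x| + 1) := by gcongr; linarith [le_abs_self (w x), hy.out]
    _ = ε := div_mul_cancel₀ _ (by positivity)

theorem eventually_norm_sub_limUnder_le [CompleteSpace E] {u : ℕ → X → E} {w : X → ℝ}
    (hu : ∀ δ > 0, ∀ᶠ k : ℕ × ℕ in atTop, ∀ x, ‖u k.1 x - u k.2 x‖ ≤ δ * w x)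
    {δ : ℝ} (hδ : 0 < δ) :
    ∀ᶠ m in atTop, ∀ x, ‖u m x - limUnder atTop (fun k => u k x)‖ ≤ δ * w x := by
  have hcauchy (x : X) : CauchySeq fun k => u k x := by
    refine cauchySeq_iff_tendsto_dist_atTop_0.2 (Metric.tendsto_nhds.2 fun ε hε => ?_)
    have hε' : 0 < ε / (|w x| + 1) := by positivity
    refine (hu _ hε').mono fun k hk => ?_
    rw [Real.dist_0_eq_abs, abs_dist, dist_eq_norm]
    calc ‖u k.1 x - u k.2 x‖ ≤ ε / (|w x| + 1) * w x := hk x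
      _ < ε / (|w x| + 1) * (|w x| + 1) := by gcongr; linarith [le_abs_self (w x)]
      _ = ε := div_mul_cancel₀ _ (by positivity)
  have hu' := hu δ hδ
  rw [← prod_atTop_atTop_eq] at hu'
  refine hu'.curry.mono fun m hm x => le_of_tendsto ?_ (hm.mono fun k hk => hk x)
  exact (tendsto_const_nhds.sub (hcauchy x).tendsto_limUnder).norm

end WeightedConvergence

section Gnorm

variable {V₁ V₂ : Type*} [NormedAddCommGroup V₁] [NormedSpace ℝ V₁]
  [NormedAddCommGroup V₂] [NormedSpace ℝ V₂] {n : ℕ} {q : ℝ}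

theorem iteratedFDeriv_sub_apply_of_contDiff {f g : V₁ → V₂} (hf : ContDiff ℝ n f)
    (hg : ContDiff ℝ n g) {i : ℕ} (hi : i ≤ n) (v : V₁) :
    iteratedFDeriv ℝ i (f - g) v = iteratedFDeriv ℝ i f v - iteratedFDeriv ℝ i g v :=
  iteratedFDeriv_sub_apply (hf.of_le (by exact_mod_cast hi)).contDiffAt
    (hg.of_le (by exact_mod_cast hi)).contDiffAt

theorem norm_le_mul_rpow_of_norm_fderiv_le {E : Type*} [NormedAddCommGroup E] [NormedSpace ℝ E]
    {f : V₁ → E} {ε r : ℝ} (hr : 0 ≤ r) (hf : Differentiable ℝ f) (h0 : ‖f 0‖ ≤ ε)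
    (hf' : ∀ v, ‖fderiv ℝ f v‖ ≤ ε * (1 + ‖v‖) ^ r) (v : V₁) :
    ‖f v‖ ≤ ε * (1 + ‖v‖) ^ (r + 1) := by
  have hε : 0 ≤ ε := (norm_nonneg _).trans h0
  have hw : 1 ≤ (1 + ‖v‖) ^ r := Real.one_le_rpow (by simp) hr
  have hmvt : ‖f v - f 0‖ ≤ ε * (1 + ‖v‖) ^ r * ‖v - 0‖ :=
    (convex_closedBall (0 : V₁) ‖v‖).norm_image_sub_le_of_norm_fderiv_le (fun x _ => hf x)
      (fun y hy => (hf' y).trans (by gcongr; simpa using hy))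
      (mem_closedBall_self (norm_nonneg v)) (mem_closedBall_zero_iff.2 le_rfl)
  rw [sub_zero] at hmvt
  calc ‖f v‖ ≤ ‖f 0‖ + ‖f v - f 0‖ := norm_le_norm_add_norm_sub' _ _
    _ ≤ ε * (1 + ‖v‖) ^ r + ε * (1 + ‖v‖) ^ r * ‖v‖ :=
        add_le_add (h0.trans (le_mul_of_one_le_right hε hw)) hmvt
    _ = ε * (1 + ‖v‖) ^ (r + 1) := by rw [Real.rpow_add_one (by positivity)]; ring

theorem norm_iteratedFDeriv_le_mul_rpow (hq : 0 ≤ q) {g : V₁ → V₂} (hg : ContDiff ℝ n g)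
    {ε : ℝ} (h0 : ∀ i < n, ‖iteratedFDeriv ℝ i g 0‖ ≤ ε)
    (hn : ∀ v, ‖iteratedFDeriv ℝ n g v‖ ≤ ε * (1 + ‖v‖) ^ q) :
    ∀ i ≤ n, ∀ v, ‖iteratedFDeriv ℝ i g v‖ ≤ ε * (1 + ‖v‖) ^ (q + (n - i : ℕ)) := by
  suffices H : ∀ d i, i + d = n → ∀ v,
      ‖iteratedFDeriv ℝ i g v‖ ≤ ε * (1 + ‖v‖) ^ (q + d) from
    fun i hi => H (n - i) i (by omega)
  intro d
  induction d with
  | zero => rintro i rfl; simpa using hn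
  | succ d ih =>
    intro i hi
    rw [Nat.cast_succ, ← add_assoc]
    refine norm_le_mul_rpow_of_norm_fderiv_le (by positivity)
      (hg.differentiable_iteratedFDeriv (by exact_mod_cast (by omega : i < n))) (h0 i (by omega))
      fun v => ?_
    rw [norm_fderiv_iteratedFDeriv]
    exact ih (i + 1) (by omega) v

theorem iSup_nnnorm_iteratedFDeriv_div_le_ofReal_iff {g : V₁ → V₂} {b : ℝ} (hb : 0 ≤ b) :
    (⨆ v : V₁, (‖iteratedFDeriv ℝ n g v‖₊ : ℝ≥0∞) / ENNReal.ofReal ((1 + ‖v‖) ^ q))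
      ≤ ENNReal.ofReal b ↔ ∀ v, ‖iteratedFDeriv ℝ n g v‖ ≤ b * (1 + ‖v‖) ^ q := by
  refine iSup_le_iff.trans (forall_congr' fun v => ?_)
  have hw : 0 < (1 + ‖v‖) ^ q := by positivity
  rw [ENNReal.div_le_iff (by simpa using hw) ENNReal.ofReal_ne_top, ← ENNReal.ofReal_mul hb,
    ← enorm_eq_nnnorm, ← ofReal_norm, ENNReal.ofReal_le_ofReal_iff (by positivity)]

theorem norm_iteratedFDeriv_le_of_Gnorm_le (hq : 0 ≤ q) {g : V₁ → V₂} (hg : ContDiff ℝ n g)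
    {ε : ℝ} (hε : 0 ≤ ε) (h : Gnorm n q g ≤ ENNReal.ofReal ε) :
    ∀ i ≤ n, ∀ v, ‖iteratedFDeriv ℝ i g v‖ ≤ ε * (1 + ‖v‖) ^ (q + (n - i : ℕ)) := by
  refine norm_iteratedFDeriv_le_mul_rpow hq hg (fun i hi => ?_)
    ((iSup_nnnorm_iteratedFDeriv_div_le_ofReal_iff hε).1 (le_add_self.trans h))
  have hi : (‖iteratedFDeriv ℝ i g 0‖₊ : ℝ≥0∞) ≤ ENNReal.ofReal ε :=
    ((Finset.single_le_sum (fun j _ => zero_le) (Finset.mem_range.2 hi)).trans le_self_add).trans h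
  rwa [← enorm_eq_nnnorm, ← ofReal_norm, ENNReal.ofReal_le_ofReal_iff hε] at hi

theorem Gnorm_le_of_norm_iteratedFDeriv_le {g : V₁ → V₂} {ε : ℝ} (hε : 0 ≤ ε)
    (h : ∀ i ≤ n, ∀ v, ‖iteratedFDeriv ℝ i g v‖ ≤ ε * (1 + ‖v‖) ^ (q + (n - i : ℕ))) :
    Gnorm n q g ≤ ENNReal.ofReal ((n + 1) * ε) := by
  have h0 : ∀ i ∈ Finset.range n, (‖iteratedFDeriv ℝ i g 0‖₊ : ℝ≥0∞) ≤ ENNReal.ofReal ε := by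
    intro i hi
    rw [← enorm_eq_nnnorm, ← ofReal_norm]
    simpa using ENNReal.ofReal_le_ofReal (h i (Finset.mem_range.1 hi).le 0)
  have hn : ∀ v, ‖iteratedFDeriv ℝ n g v‖ ≤ ε * (1 + ‖v‖) ^ q := by simpa using h n le_rfl
  calc Gnorm n q g ≤ n * ENNReal.ofReal ε + ENNReal.ofReal ε := by
        refine add_le_add ?_ ((iSup_nnnorm_iteratedFDeriv_div_le_ofReal_iff hε).2 hn)
        simpa using Finset.sum_le_sum h0
    _ = ENNReal.ofReal ((n + 1) * ε) := by
        rw [ENNReal.ofReal_mul (by positivity), ENNReal.ofReal_add (by positivity) zero_le_one]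
        simp [add_mul]

theorem Gnorm_sub_le {f g : V₁ → V₂} (hf : ContDiff ℝ n f) (hg : ContDiff ℝ n g) :
    Gnorm n q (f - g) ≤ Gnorm n q f + Gnorm n q g := by
  rw [Gnorm, Gnorm, Gnorm, add_add_add_comm, ← Finset.sum_add_distrib]
  gcongr with i hi
  · rw [iteratedFDeriv_sub_apply_of_contDiff hf hg (Finset.mem_range.1 hi).le]
    exact_mod_cast nnnorm_sub_le _ _
  · refine iSup_le fun v => ?_
    rw [iteratedFDeriv_sub_apply_of_contDiff hf hg le_rfl]
    calc _ ≤ (‖iteratedFDeriv ℝ n f v‖₊ + ‖iteratedFDeriv ℝ n g v‖₊ : ℝ≥0∞)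
          / ENNReal.ofReal ((1 + ‖v‖) ^ q) := by gcongr; exact_mod_cast nnnorm_sub_le _ _
      _ ≤ _ := by
          rw [ENNReal.add_div]
          exact add_le_add (le_iSup_of_le v le_rfl) (le_iSup_of_le v le_rfl)

theorem tendsto_Gnorm_sub_iff (hq : 0 ≤ q) {ι : Type*} {l : Filter ι} {f g : ι → V₁ → V₂}
    (hf : ∀ k, ContDiff ℝ n (f k)) (hg : ∀ k, ContDiff ℝ n (g k)) :
    Tendsto (fun k => Gnorm n q (f k - g k)) l (𝓝 0) ↔ ∀ δ > 0, ∀ᶠ k in l, ∀ i ≤ n, ∀ v,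
      ‖iteratedFDeriv ℝ i (f k) v - iteratedFDeriv ℝ i (g k) v‖
        ≤ δ * (1 + ‖v‖) ^ (q + (n - i : ℕ)) := by
  have hsub (k : ι) {i : ℕ} (hi : i ≤ n) := iteratedFDeriv_sub_apply_of_contDiff (hf k) (hg k) hi
  rw [ENNReal.tendsto_nhds_zero_iff_ofReal]
  constructor
  · intro h δ hδ
    filter_upwards [h δ hδ] with k hk i hi v
    rw [← hsub k hi]
    exact norm_iteratedFDeriv_le_of_Gnorm_le hq ((hf k).sub (hg k)) hδ.le hk i hi v
  · intro h ε hε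
    have hδ : 0 < ε / (n + 1) := by positivity
    filter_upwards [h _ hδ] with k hk
    calc Gnorm n q (f k - g k) ≤ ENNReal.ofReal ((n + 1) * (ε / (n + 1))) :=
          Gnorm_le_of_norm_iteratedFDeriv_le hδ.le fun i hi v => (hsub k hi v).symm ▸ hk i hi v
      _ = ENNReal.ofReal ε := by rw [mul_div_cancel₀ _ (by positivity)]

end Gnorm

theorem Gnorm_complete_general {V₁ V₂ : Type*}
    [NormedAddCommGroup V₁] [NormedSpace ℝ V₁]
    [NormedAddCommGroup V₂] [NormedSpace ℝ V₂] [CompleteSpace V₂]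
    (n : ℕ) (q : ℝ) (hq : 0 ≤ q)
    (φ : ℕ → V₁ → V₂)
    (hmem : ∀ m : ℕ, ContDiff ℝ n (φ m) ∧ Gnorm n q (φ m) < ⊤)
    (hcauchy : Tendsto (fun p : ℕ × ℕ => Gnorm n q (φ p.1 - φ p.2)) atTop (𝓝 0)) :
    ∃ ψ : V₁ → V₂, ContDiff ℝ n ψ ∧ Gnorm n q ψ < ⊤ ∧
      Tendsto (fun m : ℕ => Gnorm n q (φ m - ψ)) atTop (𝓝 0) := by
  have hφ (m : ℕ) : ContDiff ℝ n (φ m) := (hmem m).1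
  have hφ_cauchy := (tendsto_Gnorm_sub_iff (f := fun k : ℕ × ℕ => φ k.1) (g := fun k => φ k.2) hq
    (fun k => hφ k.1) (fun k => hφ k.2)).1 hcauchy
  let p : V₁ → FormalMultilinearSeries ℝ V₁ V₂ :=
    fun v i => limUnder atTop fun m => iteratedFDeriv ℝ i (φ m) v
  have hφ_conv : ∀ δ > 0, ∀ᶠ m in atTop, ∀ i ≤ n, ∀ v,
      ‖iteratedFDeriv ℝ i (φ m) v - p v i‖ ≤ δ * (1 + ‖v‖) ^ (q + (n - i : ℕ)) :=
    fun δ hδ => (eventually_all_finite (finite_Iic n)).2 fun i hi =>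
      eventually_norm_sub_limUnder_le (fun δ hδ => (hφ_cauchy δ hδ).mono fun _ hk => hk i hi) hδ
  have hp : HasFTaylorSeriesUpTo n (fun v => (p v 0).curry0) p :=
    .of_tendstoLocallyUniformly (fun m => (hφ m).ftaylorSeries) fun i hi =>
      tendstoLocallyUniformly_of_eventually_norm_sub_le (by fun_prop (disch := positivity))
        fun δ hδ => (hφ_conv δ hδ).mono fun _ hm => hm i (by exact_mod_cast hi)
  let ψ : V₁ → V₂ := fun v => (p v 0).curry0
  have hψ : ContDiff ℝ n ψ := hp.contDiff
  have hlim : Tendsto (fun m => Gnorm n q (φ m - ψ)) atTop (𝓝 0) :=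
    (tendsto_Gnorm_sub_iff (g := fun _ => ψ) hq hφ fun _ => hψ).2 fun δ hδ => (hφ_conv δ hδ).mono
      fun m hm i hi v => hp.eq_iteratedFDeriv (by exact_mod_cast hi) v ▸ hm i hi v
  obtain ⟨m, hm⟩ := (ENNReal.tendsto_nhds_zero.1 hlim 1 one_pos).exists
  refine ⟨ψ, hψ, ?_, hlim⟩
  calc Gnorm n q ψ = Gnorm n q (φ m - (φ m - ψ)) := by rw [sub_sub_cancel]
    _ ≤ Gnorm n q (φ m) + Gnorm n q (φ m - ψ) := Gnorm_sub_le (hφ m) ((hφ m).sub hψ)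
    _ < ⊤ := ENNReal.add_lt_top.2 ⟨(hmem m).2, hm.trans_lt ENNReal.one_lt_top⟩

/-- **Completeness of `G^n_q`**: every sequence in
`G^n_q(V₁,V₂) = {φ ∈ Cⁿ : ‖φ‖_{G^n_q} < ∞}` which is Cauchy with respect to
`‖·‖_{G^n_q}` (i.e. `lim_{m,l→∞} ‖φ_m − φ_l‖_{G^n_q} = 0`) converges in the
`‖·‖_{G^n_q}`-sense to some element of `G^n_q(V₁,V₂)`. -/
theorem Gnorm_complete {V₁ V₂ : Type*}
    [NormedAddCommGroup V₁] [NormedSpace ℝ V₁] [CompleteSpace V₁]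
    [NormedAddCommGroup V₂] [NormedSpace ℝ V₂] [CompleteSpace V₂]
    (n : ℕ) (q : ℝ) (hq : 0 ≤ q)
    (φ : ℕ → V₁ → V₂)
    (hmem : ∀ m : ℕ, ContDiff ℝ n (φ m) ∧ Gnorm n q (φ m) < ⊤)
    (hcauchy : Tendsto (fun p : ℕ × ℕ => Gnorm n q (φ p.1 - φ p.2)) atTop (𝓝 0)) :
    ∃ ψ : V₁ → V₂, ContDiff ℝ n ψ ∧ Gnorm n q ψ < ⊤ ∧
      Tendsto (fun m : ℕ => Gnorm n q (φ m - ψ)) atTop (𝓝 0) :=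
  Gnorm_complete_general n q hq φ hmem hcauchy
end
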